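/- arXiv:math/0502144 — 11 statements merged into one kernel-verified Lean document; each statement's English description precedes it below -/
import Mathlib

section
/- Let R = k[x_1,...,x_n,y] be a polynomial ring and I an ideal with Gröbner basis {y^{d_i} q_i + r_i} (i = 1,...,m) with respect to a term order such that the initial term of any polynomial is a term of its initial y-form, where y^{d_i} q_i is the initial y-form of y^{d_i} q_i + r_i and y does not divide q_i. Set C = ⟨q_1,...,q_m⟩ and I' = ⟨y^{d_i} q_i : i = 1,...,m⟩. Then C equals the saturation (I' : y^∞) = { f ∈ R : y^j f ∈ I' for some j ≥ 0 }. -/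
/-!
All terms of `y^{d_i} q_i` have the top `y`-degree of `y^{d_i} q_i + r_i`, so all terms of `q_i`
have the same `y`-degree; as `y ∤ q_i`, that degree is `0`. Writing `R = A[y]` with
`A = k[x_1,…,x_n]`, the ideal `C` is then the extension of the ideal `⟨q_i⟩ ⊆ A`, i.e. the
polynomials all of whose `y`-coefficients lie in it, and membership in such an ideal is unaffected
by multiplying by `y`. Together with `y^{max d_i} C ⊆ I' ⊆ C` this gives `C = (I' : y^∞)`.
-/

open MvPolynomial

noncomputable section

/-- The variable `y` (the last variable) in `R = k[x_1,…,x_n,y]`. -/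
def yv (k : Type*) [Field k] (n : ℕ) : MvPolynomial (Fin (n + 1)) k :=
  X (Fin.last n)

/-- The degree in `y` (the last variable). -/
def ydeg {k : Type*} [Field k] {n : ℕ} (p : MvPolynomial (Fin (n + 1)) k) : ℕ :=
  p.support.sup (fun m => m (Fin.last n))

/-- The initial `y`-form of `p`: the sum of all terms of `p` having the highest
power of `y`. -/
def iny {k : Type*} [Field k] {n : ℕ} (p : MvPolynomial (Fin (n + 1)) k) :
    MvPolynomial (Fin (n + 1)) k :=
  ∑ m ∈ p.support.filter (fun m => m (Fin.last n) = ydeg p), monomial m (p.coeff m)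

/-- A term order on the monomials of a polynomial ring: a linear order on exponent
vectors compatible with addition and with `0` smallest. -/
structure TermOrder (σ : Type*) where
  lo : LinearOrder (σ →₀ ℕ)
  add_le : ∀ a b c : σ →₀ ℕ, lo.le a b → lo.le (a + c) (b + c)
  zero_le : ∀ a : σ →₀ ℕ, lo.le 0 a

/-- The leading monomial of `p` (as an element of `WithBot`; `⊥` for `p = 0`). -/
def lm {k : Type*} [Field k] {σ : Type*} (ord : TermOrder σ)
    (p : MvPolynomial σ k) : WithBot (σ →₀ ℕ) :=
  letI := ord.lo
  p.support.max

/-- The leading term of `p` under the term order `ord`. -/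
def leadTerm {k : Type*} [Field k] {σ : Type*} (ord : TermOrder σ)
    (p : MvPolynomial σ k) : MvPolynomial σ k :=
  letI := ord.lo
  if h : p.support.Nonempty then
    monomial (p.support.max' h) (p.coeff (p.support.max' h))
  else 0

/-- The initial ideal of `J` under `ord`: generated by the leading terms of the
nonzero elements of `J`. -/
def initIdeal {k : Type*} [Field k] {σ : Type*} (ord : TermOrder σ)
    (J : Ideal (MvPolynomial σ k)) : Ideal (MvPolynomial σ k) :=
  Ideal.span { t | ∃ f ∈ J, f ≠ 0 ∧ t = leadTerm ord f }

/-- `g` is a Gröbner basis of `I` with respect to `ord`: the `g i` lie in `I`,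
generate it, and the leading monomial of every nonzero element of `I` is divisible
by the leading monomial of some `g i`. -/
def IsGB {k : Type*} [Field k] {σ : Type*} {ι : Type*} (ord : TermOrder σ)
    (I : Ideal (MvPolynomial σ k)) (g : ι → MvPolynomial σ k) : Prop :=
  (∀ i, g i ∈ I) ∧ I = Ideal.span (Set.range g) ∧
    ∀ f ∈ I, f ≠ 0 → ∃ (i : ι) (a b : σ →₀ ℕ),
      lm ord (g i) = (a : WithBot (σ →₀ ℕ)) ∧
      lm ord f = ((a + b : σ →₀ ℕ) : WithBot (σ →₀ ℕ))

theorem Ideal.exists_pow_mul_mem_span_pow_mul {R ι : Type*} [CommSemiring R] [Finite ι]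
    (x : R) (d : ι → ℕ) (g : ι → R) {f : R} (hf : f ∈ Ideal.span (Set.range g)) :
    ∃ j, x ^ j * f ∈ Ideal.span (Set.range fun i => x ^ d i * g i) := by
  obtain ⟨D, hD⟩ := Finite.exists_le d
  set J := Ideal.span (Set.range fun i => x ^ d i * g i)
  suffices h : Ideal.span (Set.range g) ≤ Submodule.comap (LinearMap.mulLeft R (x ^ D)) J from
    ⟨D, h hf⟩
  refine Ideal.span_le.mpr (Set.range_subset_iff.mpr fun i => ?_)
  have hx : x ^ D * g i = x ^ (D - d i) * (x ^ d i * g i) := by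
    rw [← mul_assoc, ← pow_add, Nat.sub_add_cancel (hD i)]
  show x ^ D * g i ∈ J
  exact hx ▸ J.mul_mem_left _ (Ideal.subset_span ⟨i, rfl⟩)

theorem Ideal.span_range_mul_le {R ι : Type*} [CommSemiring R] (c g : ι → R) :
    Ideal.span (Set.range fun i => c i * g i) ≤ Ideal.span (Set.range g) :=
  Ideal.span_le.mpr <| Set.range_subset_iff.mpr fun i =>
    Ideal.mul_mem_left _ _ (Ideal.subset_span ⟨i, rfl⟩)

theorem Ideal.mem_map_C_of_X_pow_mul_mem {R : Type*} [CommSemiring R] {I : Ideal R}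
    {f : Polynomial R} {j : ℕ} (h : Polynomial.X ^ j * f ∈ I.map Polynomial.C) :
    f ∈ I.map Polynomial.C :=
  mem_map_C_iff.mpr fun t => Polynomial.coeff_X_pow_mul f j t ▸ mem_map_C_iff.mp h (t + j)

theorem MvPolynomial.X_dvd_of_forall_mem_support {R σ : Type*} [CommSemiring R] {i : σ}
    {p : MvPolynomial σ R} (h : ∀ u ∈ p.support, u i ≠ 0) : X i ∣ p := by
  rw [X_dvd_iff_modMonomial_eq_zero]
  ext u
  by_cases hu : Finsupp.single i 1 ≤ u
  · rw [coeff_modMonomial_of_le _ hu, coeff_zero]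
  · rw [coeff_modMonomial_of_not_le _ hu, coeff_zero, ← notMem_support_iff]
    exact fun hmem => hu (Finsupp.single_le_iff.mpr (Nat.one_le_iff_ne_zero.mpr (h u hmem)))

theorem MvPolynomial.mem_span_of_X_pow_mul_mem_span {R σ ι : Type*} [CommSemiring R] {a : σ}
    {q : ι → MvPolynomial σ R} (hq : ∀ i, degreeOf a (q i) = 0) {f : MvPolynomial σ R} {j : ℕ}
    (h : X a ^ j * f ∈ Ideal.span (Set.range q)) : f ∈ Ideal.span (Set.range q) := by
  classical
  -- `e` views a polynomial as a polynomial in `X a` over the remaining variables.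
  let e := (renameEquiv R (Equiv.optionSubtypeNe a).symm).trans (optionEquivLeft R {b // b ≠ a})
  have he_X : e (X a) = Polynomial.X := by
    simp [e, Equiv.optionSubtypeNe_symm_apply, optionEquivLeft_X_none]
  have he_q : ∀ i, e (q i) = Polynomial.C ((e (q i)).coeff 0) := fun i =>
    Polynomial.eq_C_of_natDegree_eq_zero ((degreeOf_eq_natDegree a (q i)).symm.trans (hq i))
  have hmap : (Ideal.span (Set.range q)).map e =
      (Ideal.span (Set.range fun i => (e (q i)).coeff 0)).map Polynomial.C := by
    simp only [Ideal.map_span, ← Set.range_comp]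
    exact congrArg _ (congrArg _ (_root_.funext he_q))
  have he_h : Polynomial.X ^ j * e f ∈ (Ideal.span (Set.range q)).map e := by
    simpa only [map_mul, map_pow, he_X] using Ideal.mem_map_of_mem e h
  rw [hmap] at he_h
  obtain ⟨g, hg, hge⟩ :=
    (Ideal.mem_map_of_equiv e _).mp (hmap ▸ Ideal.mem_map_C_of_X_pow_mul_mem he_h)
  rwa [e.injective hge] at hg

theorem MvPolynomial.mem_span_iff_exists_X_pow_mul_mem_span {R σ ι : Type*} [CommSemiring R]
    [Finite ι] {a : σ} (d : ι → ℕ) {q : ι → MvPolynomial σ R} (hq : ∀ i, degreeOf a (q i) = 0)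
    (f : MvPolynomial σ R) :
    f ∈ Ideal.span (Set.range q) ↔
      ∃ j, X a ^ j * f ∈ Ideal.span (Set.range fun i => X a ^ d i * q i) :=
  ⟨Ideal.exists_pow_mul_mem_span_pow_mul _ d q, fun ⟨_, hj⟩ =>
    mem_span_of_X_pow_mul_mem_span hq (Ideal.span_range_mul_le _ q hj)⟩

theorem coeff_iny_eq_zero {k : Type*} [Field k] {n : ℕ} (p : MvPolynomial (Fin (n + 1)) k)
    {u : Fin (n + 1) →₀ ℕ} (hu : u (Fin.last n) ≠ ydeg p) : coeff u (iny p) = 0 := by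
  classical
  rw [iny, coeff_sum]
  refine Finset.sum_eq_zero fun v hv => ?_
  rw [coeff_monomial, if_neg]
  rintro rfl
  exact hu (Finset.mem_filter.mp hv).2

theorem add_eq_ydeg_of_iny_eq {k : Type*} [Field k] {n d : ℕ}
    {g q : MvPolynomial (Fin (n + 1)) k} (hiny : iny g = yv k n ^ d * q)
    {u : Fin (n + 1) →₀ ℕ} (hu : u ∈ q.support) : u (Fin.last n) + d = ydeg g := by
  have hcoeff : coeff (Finsupp.single (Fin.last n) d + u) (iny g) ≠ 0 := by
    rwa [hiny, yv, X_pow_eq_monomial, coeff_monomial_mul, one_mul, ← mem_support_iff]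
  by_contra hne
  refine hcoeff (coeff_iny_eq_zero g ?_)
  simpa [add_comm] using hne

theorem degreeOf_last_eq_zero_of_iny_eq {k : Type*} [Field k] {n d : ℕ}
    {g q : MvPolynomial (Fin (n + 1)) k} (hiny : iny g = yv k n ^ d * q) (hq : ¬ yv k n ∣ q) :
    degreeOf (Fin.last n) q = 0 := by
  obtain ⟨u₀, hu₀, hu₀y⟩ : ∃ u₀ ∈ q.support, u₀ (Fin.last n) = 0 := by
    by_contra! h
    exact hq (X_dvd_of_forall_mem_support h)
  rw [degreeOf_eq_sup, ← Nat.le_zero]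
  refine Finset.sup_le fun u hu => ?_
  have := (add_eq_ydeg_of_iny_eq hiny hu).trans (add_eq_ydeg_of_iny_eq hiny hu₀).symm
  omega

theorem stmt_0_general {k : Type*} [Field k] {n m : ℕ}
    (d : Fin m → ℕ) (q r : Fin m → MvPolynomial (Fin (n + 1)) k)
    (hiny : ∀ i, iny (yv k n ^ d i * q i + r i) = yv k n ^ d i * q i)
    (hq : ∀ i, ¬ yv k n ∣ q i) :
    ∀ f : MvPolynomial (Fin (n + 1)) k,
      f ∈ Ideal.span (Set.range q) ↔
        ∃ j : ℕ, yv k n ^ j * f ∈ Ideal.span (Set.range fun i => yv k n ^ d i * q i) :=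
  mem_span_iff_exists_X_pow_mul_mem_span d fun i =>
    degreeOf_last_eq_zero_of_iny_eq (hiny i) (hq i)

/-- Let `{y^{d i} * q i + r i}` be a Gröbner basis of `I ⊆ k[x_1,…,x_n,y]` for a
term order whose leading term of any polynomial is a term of its initial `y`-form,
where `y^{d i} * q i` is the initial `y`-form of `y^{d i} * q i + r i` and
`y ∤ q i`.  Then `C = ⟨q_1,…,q_m⟩` equals the saturation
`(I' : y^∞) = {f : y^j f ∈ I' for some j}` where `I' = ⟨y^{d i} * q i⟩`. -/
theorem stmt_0 {k : Type*} [Field k] {n m : ℕ}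
    (ord : TermOrder (Fin (n + 1)))
    (hord : ∀ p : MvPolynomial (Fin (n + 1)) k, lm ord p = lm ord (iny p))
    (I : Ideal (MvPolynomial (Fin (n + 1)) k))
    (d : Fin m → ℕ) (q r : Fin m → MvPolynomial (Fin (n + 1)) k)
    (hGB : IsGB ord I (fun i => yv k n ^ d i * q i + r i))
    (hiny : ∀ i, iny (yv k n ^ d i * q i + r i) = yv k n ^ d i * q i)
    (hq : ∀ i, ¬ yv k n ∣ q i) :
    ∀ f : MvPolynomial (Fin (n + 1)) k,
      f ∈ Ideal.span (Set.range q) ↔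
        ∃ j : ℕ, yv k n ^ j * f ∈ Ideal.span (Set.range fun i => yv k n ^ d i * q i) :=
  stmt_0_general d q r hiny hq
end
end

section
/- With notation as above, if max_i d_i = 1, then I' = C ∩ P, where P = ⟨q_i : d_i = 0⟩ + ⟨y⟩ and C = ⟨q_1,...,q_m⟩. Moreover init(C + P) = init(C) + init(P). -/
open MvPolynomial

noncomputable section

/-!
Every `q i` is free of `y`: `y ^ d i * q i` is an initial `y`-form, hence `y`-homogeneous, and
`y ∤ q i` provides a monomial of `q i` without `y`. So substituting `y = 0` maps `C` into itself,
and `c - c(y = 0) ∈ y C` for `c ∈ C`; this gives `C ∩ ⟨y⟩ = y C`, which lies in `I'` because every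
`d i ≤ 1`. Splitting an element of `C ∩ P` along `P = ⟨q i : d i = 0⟩ + ⟨y⟩` yields `C ∩ P ⊆ I'`.
For the initial ideals, write `f ∈ C + P = C + ⟨y⟩`: if `f` does not involve `y` then
`f = f(y = 0) ∈ C`; otherwise, since the term order refines the `y`-degree, the leading monomial of
`f` contains `y`, so the leading term of `f` lies in `⟨y⟩ ⊆ init P`.
-/

namespace MvPolynomial

variable {R σ : Type*} [CommRing R] {i : σ}

lemma notMem_vars_of_X_pow_mul {q : MvPolynomial σ R} (d D : ℕ) (hq : ¬ X i ∣ q)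
    (h : ∀ a ∈ (X i ^ d * q).support, a i = D) : i ∉ q.vars := by
  have hshift (a) (ha : a ∈ q.support) : a i + d = D := by
    have := h (Finsupp.single i d + a) (by
      rwa [mem_support_iff, X_pow_eq_monomial, coeff_monomial_mul, one_mul, ← mem_support_iff])
    simpa [add_comm] using this
  obtain ⟨a₀, ha₀, ha₀i⟩ : ∃ a ∈ q.support, a i = 0 := by
    by_contra! hall
    exact hq (q.as_sum ▸ Finset.dvd_sum fun a ha => X_dvd_monomial.2 (Or.inr (hall a ha)))
  rw [mem_vars_iff_mem_support]
  rintro ⟨a, ha, hai⟩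
  have h₀ := hshift a₀ ha₀
  have h₁ := hshift a ha
  have hai' := Finsupp.mem_support_iff.1 hai
  omega

variable [DecidableEq σ]

def zeroVar (i : σ) : MvPolynomial σ R →ₐ[R] MvPolynomial σ R :=
  aeval (Function.update X i 0)

@[simp]
lemma zeroVar_X_self : zeroVar i (X i : MvPolynomial σ R) = 0 := by
  simp [zeroVar]

lemma zeroVar_eq_self {p : MvPolynomial σ R} (h : i ∉ p.vars) : zeroVar i p = p :=
  hom_congr_vars (f₂ := RingHom.id _) (by ext; simp [zeroVar])
    (fun j hj _ => by simp [zeroVar, Function.update_of_ne (ne_of_mem_of_not_mem hj h)]) rfl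

lemma X_dvd_sub_zeroVar (i : σ) (p : MvPolynomial σ R) : X i ∣ p - zeroVar i p := by
  induction p using MvPolynomial.induction_on with
  | C a => simp [zeroVar]
  | add p q hp hq => simpa [sub_add_sub_comm] using dvd_add hp hq
  | mul_X p j hp =>
    by_cases hj : j = i
    · subst hj
      simp
    · have : p * X j - zeroVar i (p * X j) = (p - zeroVar i p) * X j := by
        simp [zeroVar, Function.update_of_ne hj, sub_mul]
      exact this ▸ hp.mul_right _

variable {s : Set (MvPolynomial σ R)}

lemma sub_zeroVar_mem_span_X_mul (hs : ∀ g ∈ s, i ∉ g.vars) {c : MvPolynomial σ R}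
    (hc : c ∈ Ideal.span s) : c - zeroVar i c ∈ Ideal.span {X i} * Ideal.span s := by
  induction hc using Submodule.span_induction with
  | mem g hg => simp [zeroVar_eq_self (hs g hg)]
  | zero => simp
  | add a b _ _ ha hb => simpa [add_sub_add_comm] using add_mem ha hb
  | smul a b hb ihb =>
    have : a • b - zeroVar i (a • b) = (a - zeroVar i a) * b + zeroVar i a * (b - zeroVar i b) := by
      simp only [smul_eq_mul, map_mul]
      ring
    rw [this]
    exact add_mem (Ideal.mul_mem_mul (Ideal.mem_span_singleton.2 (X_dvd_sub_zeroVar i a)) hb)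
      (Ideal.mul_mem_left _ _ ihb)

lemma zeroVar_mem_span (hs : ∀ g ∈ s, i ∉ g.vars) {c : MvPolynomial σ R}
    (hc : c ∈ Ideal.span s) : zeroVar i c ∈ Ideal.span s := by
  simpa using sub_mem hc (Ideal.mul_le_right (sub_zeroVar_mem_span_X_mul hs hc))

lemma span_inf_span_X_eq_mul (hs : ∀ g ∈ s, i ∉ g.vars) :
    Ideal.span s ⊓ Ideal.span {X i} = Ideal.span {X i} * Ideal.span s := by
  refine le_antisymm (fun c hc => ?_) (le_inf Ideal.mul_le_right Ideal.mul_le_left)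
  obtain ⟨hcs, hcX⟩ := Submodule.mem_inf.1 hc
  obtain ⟨t, rfl⟩ := Ideal.mem_span_singleton.1 hcX
  simpa using sub_zeroVar_mem_span_X_mul hs hcs

theorem span_X_pow_mul_eq_inf {ι : Type*} (q : ι → MvPolynomial σ R) (d : ι → ℕ)
    (hd : ∀ j, d j ≤ 1) (hq : ∀ j, i ∉ (q j).vars) :
    Ideal.span (Set.range fun j => X i ^ d j * q j) =
      Ideal.span (Set.range q) ⊓ (Ideal.span (q '' {j | d j = 0}) + Ideal.span {X i}) := by
  set I' := Ideal.span (Set.range fun j => X i ^ d j * q j)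
  have hgen (j : ι) : X i ^ d j * q j ∈ I' := Ideal.subset_span ⟨j, rfl⟩
  have hA : Ideal.span (q '' {j | d j = 0}) ≤ I' :=
    Ideal.span_le.2 fun _ ⟨j, (hj : d j = 0), hqj⟩ => by simpa [hj, hqj] using hgen j
  have hXq (j : ι) : X i * q j ∈ I' := by
    rcases Nat.le_one_iff_eq_zero_or_eq_one.1 (hd j) with hj | hj
    · exact Ideal.mul_mem_left _ _ (by simpa [hj] using hgen j)
    · simpa [hj] using hgen j
  have hXC : Ideal.span {X i} * Ideal.span (Set.range q) ≤ I' := by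
    rw [Ideal.span_mul_span', Ideal.span_le]
    rintro _ ⟨_, rfl, _, ⟨j, rfl⟩, rfl⟩
    exact hXq j
  rw [Submodule.add_eq_sup]
  refine le_antisymm (Ideal.span_le.2 ?_) fun f hf => ?_
  · rintro _ ⟨j, rfl⟩
    refine ⟨Ideal.mul_mem_left _ _ (Ideal.subset_span ⟨j, rfl⟩), ?_⟩
    rcases Nat.le_one_iff_eq_zero_or_eq_one.1 (hd j) with hj | hj
    · exact Ideal.mem_sup_left (Ideal.subset_span ⟨j, hj, by simp [hj]⟩)
    · exact Ideal.mem_sup_right (Ideal.mem_span_singleton.2 (by simp [hj]))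
  obtain ⟨hfC, hfP⟩ := Submodule.mem_inf.1 hf
  obtain ⟨u, hu, v, hv, rfl⟩ := Submodule.mem_sup.1 hfP
  have hvC : v ∈ Ideal.span (Set.range q) :=
    (Submodule.add_mem_iff_right _ (Ideal.span_mono (Set.image_subset_range _ _) hu)).1 hfC
  have hvX : v ∈ Ideal.span (Set.range q) ⊓ Ideal.span {X i} := ⟨hvC, hv⟩
  rw [span_inf_span_X_eq_mul (by rintro _ ⟨j, rfl⟩; exact hq j)] at hvX
  exact add_mem (hA hu) (hXC hvX)

end MvPolynomial

section InitialForms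

variable {k : Type*} [Field k] {n : ℕ}

lemma ydeg_eq_degreeOf (p : MvPolynomial (Fin (n + 1)) k) :
    ydeg p = p.degreeOf (Fin.last n) :=
  (degreeOf_eq_sup _ _).symm

lemma ydeg_of_mem_support_iny {p : MvPolynomial (Fin (n + 1)) k} {a : Fin (n + 1) →₀ ℕ}
    (h : a ∈ (iny p).support) : a (Fin.last n) = ydeg p := by
  obtain ⟨b, hb, hab⟩ := Finset.mem_biUnion.1 (support_sum h)
  rw [Finset.mem_singleton.1 (support_monomial_subset hab)]
  exact (Finset.mem_filter.1 hb).2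

lemma last_notMem_vars_of_iny_eq {d : ℕ} {q r : MvPolynomial (Fin (n + 1)) k}
    (hiny : iny (yv k n ^ d * q + r) = yv k n ^ d * q) (hq : ¬ yv k n ∣ q) :
    Fin.last n ∉ q.vars :=
  notMem_vars_of_X_pow_mul d _ hq fun _ ha => ydeg_of_mem_support_iny (hiny ▸ ha)

lemma yv_dvd_leadTerm (ord : TermOrder (Fin (n + 1))) {f : MvPolynomial (Fin (n + 1)) k}
    (hf : lm ord f = lm ord (iny f)) (hy : ydeg f ≠ 0) : yv k n ∣ leadTerm ord f := by
  let := ord.lo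
  have hne : f.support.Nonempty := support_nonempty.2 (by rintro rfl; simp [ydeg] at hy)
  have hmem : f.support.max' hne ∈ (iny f).support :=
    Finset.mem_of_max (by rw [← lm, ← hf, lm, Finset.coe_max'])
  rw [leadTerm, dif_pos hne]
  exact X_dvd_monomial.2 (Or.inr (by rw [ydeg_of_mem_support_iny hmem]; exact hy))

lemma leadTerm_X {σ : Type*} (ord : TermOrder σ) (i : σ) :
    leadTerm ord (X i : MvPolynomial σ k) = X i := by
  let := ord.lo
  simp only [leadTerm, support_X, Finset.singleton_nonempty, ↓reduceDIte, Finset.max'_singleton,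
    coeff_X_same]
  rfl

lemma X_mem_initIdeal {σ : Type*} (ord : TermOrder σ) {J : Ideal (MvPolynomial σ k)} {i : σ}
    (h : X i ∈ J) : X i ∈ initIdeal ord J :=
  Ideal.subset_span ⟨X i, h, X_ne_zero i, (leadTerm_X ord i).symm⟩

lemma initIdeal_mono {σ : Type*} (ord : TermOrder σ) {J J' : Ideal (MvPolynomial σ k)}
    (h : J ≤ J') : initIdeal ord J ≤ initIdeal ord J' :=
  Ideal.span_mono fun _ ⟨f, hf, hf0, ht⟩ => ⟨f, h hf, hf0, ht⟩

lemma initIdeal_span_sup_le (ord : TermOrder (Fin (n + 1)))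
    (hord : ∀ p : MvPolynomial (Fin (n + 1)) k, lm ord p = lm ord (iny p))
    {s : Set (MvPolynomial (Fin (n + 1)) k)} (hs : ∀ g ∈ s, Fin.last n ∉ g.vars) :
    initIdeal ord (Ideal.span s ⊔ Ideal.span {yv k n}) ≤
      initIdeal ord (Ideal.span s) ⊔ Ideal.span {yv k n} := by
  refine Ideal.span_le.2 ?_
  rintro _ ⟨f, hf, hf0, rfl⟩
  by_cases hy : ydeg f = 0
  · obtain ⟨c, hc, _, hv, rfl⟩ := Submodule.mem_sup.1 hf
    obtain ⟨t, rfl⟩ := Ideal.mem_span_singleton.1 hv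
    have hfree : Fin.last n ∉ (c + yv k n * t).vars := by
      rwa [mem_vars_iff_degreeOf_ne_zero, ← ydeg_eq_degreeOf, not_not]
    have hfc : c + yv k n * t = zeroVar (Fin.last n) c := by
      rw [← zeroVar_eq_self hfree, map_add, map_mul, yv, zeroVar_X_self, zero_mul, add_zero]
    refine Ideal.mem_sup_left (Ideal.subset_span ⟨_, ?_, hf0, rfl⟩)
    exact hfc ▸ zeroVar_mem_span hs hc
  · exact Ideal.mem_sup_right (Ideal.mem_span_singleton.2 (yv_dvd_leadTerm ord (hord f) hy))

end InitialForms

theorem stmt_1_general {k : Type*} [Field k] {n m : ℕ}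
    (ord : TermOrder (Fin (n + 1)))
    (hord : ∀ p : MvPolynomial (Fin (n + 1)) k, lm ord p = lm ord (iny p))
    (d : Fin m → ℕ) (q r : Fin m → MvPolynomial (Fin (n + 1)) k)
    (hiny : ∀ i, iny (yv k n ^ d i * q i + r i) = yv k n ^ d i * q i)
    (hq : ∀ i, ¬ yv k n ∣ q i)
    (hd1 : ∀ i, d i ≤ 1) :
    Ideal.span (Set.range fun i => yv k n ^ d i * q i) =
        Ideal.span (Set.range q) ⊓
          (Ideal.span (q '' {i | d i = 0}) + Ideal.span {yv k n}) ∧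
      initIdeal ord (Ideal.span (Set.range q) +
          (Ideal.span (q '' {i | d i = 0}) + Ideal.span {yv k n})) =
        initIdeal ord (Ideal.span (Set.range q)) +
          initIdeal ord (Ideal.span (q '' {i | d i = 0}) + Ideal.span {yv k n}) := by
  have hfree (i : Fin m) : Fin.last n ∉ (q i).vars := last_notMem_vars_of_iny_eq (hiny i) (hq i)
  refine ⟨span_X_pow_mul_eq_inf q d hd1 hfree, le_antisymm ?_ ?_⟩
  · have hA : Ideal.span (q '' {i | d i = 0}) ≤ Ideal.span (Set.range q) :=
      Ideal.span_mono (Set.image_subset_range _ _)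
    have hyP : Ideal.span {yv k n} ≤
        initIdeal ord (Ideal.span (q '' {i | d i = 0}) + Ideal.span {yv k n}) :=
      Ideal.span_le.2 (Set.singleton_subset_iff.2
        (X_mem_initIdeal ord (Ideal.mem_sup_right (Ideal.subset_span rfl))))
    calc _ ≤ initIdeal ord (Ideal.span (Set.range q) ⊔ Ideal.span {yv k n}) :=
          initIdeal_mono ord (sup_le le_sup_left (sup_le (hA.trans le_sup_left) le_sup_right))
      _ ≤ initIdeal ord (Ideal.span (Set.range q)) ⊔ Ideal.span {yv k n} :=
          initIdeal_span_sup_le ord hord (by rintro _ ⟨i, rfl⟩; exact hfree i)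
      _ ≤ _ := sup_le_sup_left hyP _
  · exact sup_le (initIdeal_mono ord le_sup_left) (initIdeal_mono ord le_sup_right)

/-- With `{y^{d i} * q i + r i}` a Gröbner basis of `I` as before, if
`max_i d i = 1` then `I' = C ∩ P` where `I' = ⟨y^{d i} q i⟩`, `C = ⟨q_1,…,q_m⟩`,
and `P = ⟨q i : d i = 0⟩ + ⟨y⟩`; moreover `init(C + P) = init(C) + init(P)`. -/
theorem stmt_1 {k : Type*} [Field k] {n m : ℕ}
    (ord : TermOrder (Fin (n + 1)))
    (hord : ∀ p : MvPolynomial (Fin (n + 1)) k, lm ord p = lm ord (iny p))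
    (I : Ideal (MvPolynomial (Fin (n + 1)) k))
    (d : Fin m → ℕ) (q r : Fin m → MvPolynomial (Fin (n + 1)) k)
    (hGB : IsGB ord I (fun i => yv k n ^ d i * q i + r i))
    (hiny : ∀ i, iny (yv k n ^ d i * q i + r i) = yv k n ^ d i * q i)
    (hq : ∀ i, ¬ yv k n ∣ q i)
    (hd1 : ∀ i, d i ≤ 1) (hd : ∃ i, d i = 1) :
    Ideal.span (Set.range fun i => yv k n ^ d i * q i) =
        Ideal.span (Set.range q) ⊓
          (Ideal.span (q '' {i | d i = 0}) + Ideal.span {yv k n}) ∧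
      initIdeal ord (Ideal.span (Set.range q) +
          (Ideal.span (q '' {i | d i = 0}) + Ideal.span {yv k n})) =
        initIdeal ord (Ideal.span (Set.range q)) +
          initIdeal ord (Ideal.span (q '' {i | d i = 0}) + Ideal.span {yv k n}) :=
  stmt_1_general ord hord d q r hiny hq hd1
end
end

section
/- With notation as above, the radical of I' equals the intersection of the radicals of C and P: √(I') = √C ∩ √P. -/
open MvPolynomial

noncomputable section

/-- With `{y^{d i} * q i + r i}` a Gröbner basis of `I` as before,
`√(I') = √C ∩ √P` where `I' = ⟨y^{d i} q i⟩`, `C = ⟨q_1,…,q_m⟩`, and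
`P = ⟨q i : d i = 0⟩ + ⟨y⟩`. -/
theorem stmt_2 {k : Type*} [Field k] {n m : ℕ}
    (ord : TermOrder (Fin (n + 1)))
    (hord : ∀ p : MvPolynomial (Fin (n + 1)) k, lm ord p = lm ord (iny p))
    (I : Ideal (MvPolynomial (Fin (n + 1)) k))
    (d : Fin m → ℕ) (q r : Fin m → MvPolynomial (Fin (n + 1)) k)
    (hGB : IsGB ord I (fun i => yv k n ^ d i * q i + r i))
    (hiny : ∀ i, iny (yv k n ^ d i * q i + r i) = yv k n ^ d i * q i)
    (hq : ∀ i, ¬ yv k n ∣ q i) :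
    (Ideal.span (Set.range fun i => yv k n ^ d i * q i)).radical =
      (Ideal.span (Set.range q)).radical ⊓
        (Ideal.span (q '' {i | d i = 0}) + Ideal.span {yv k n}).radical := by
  classical
  set Y : MvPolynomial (Fin (n+1)) k := yv k n with hY
  set I' := Ideal.span (Set.range fun i => Y ^ d i * q i) with hI'
  set C := Ideal.span (Set.range q) with hC
  set P := Ideal.span (q '' {i | d i = 0}) + Ideal.span {Y} with hP
  have hPspan : P = Ideal.span (q '' {i | d i = 0} ∪ {Y}) := by
    rw [Ideal.span_union]; rfl
  have key : C * P ≤ I'.radical := by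
    rw [hPspan, hC, Ideal.span_mul_span', Ideal.span_le]
    rintro x hx
    rw [Set.mem_mul] at hx
    obtain ⟨a, ⟨i, rfl⟩, b, hb, rfl⟩ := hx
    rcases hb with ⟨j, hj, rfl⟩ | hb
    · apply Ideal.le_radical
      have h0 : (d j : ℕ) = 0 := hj
      have : q i * q j = q i * (Y ^ d j * q j) := by rw [h0, pow_zero, one_mul]
      rw [this]
      exact Ideal.mul_mem_left _ _ (Ideal.subset_span ⟨j, rfl⟩)
    · rw [Set.mem_singleton_iff] at hb; subst hb
      refine ⟨d i + 1, ?_⟩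
      have : (q i * Y) ^ (d i + 1) = (Y ^ d i * q i) * (q i ^ d i * Y) := by ring
      rw [this]
      exact Ideal.mul_mem_right _ _ (Ideal.subset_span ⟨i, rfl⟩)
  apply le_antisymm
  · apply le_inf
    · apply Ideal.radical_mono
      rw [Ideal.span_le]
      rintro _ ⟨i, rfl⟩
      exact Ideal.mul_mem_left _ _ (Ideal.subset_span ⟨i, rfl⟩)
    · apply Ideal.radical_mono
      rw [Ideal.span_le]
      rintro _ ⟨i, rfl⟩
      show Y ^ d i * q i ∈ (P : Set _)
      rcases Nat.eq_zero_or_pos (d i) with h | h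
      · rw [h, pow_zero, one_mul]
        exact Ideal.mem_sup_left (Ideal.subset_span ⟨i, h, rfl⟩)
      · have : Y ^ d i * q i = Y * (Y ^ (d i - 1) * q i) := by
          rw [← mul_assoc, ← pow_succ', Nat.sub_add_cancel h]
        rw [this]
        exact Ideal.mem_sup_right (Ideal.mul_mem_right _ _ (Ideal.subset_span rfl))
  · rintro f hf
    obtain ⟨a, ha⟩ := hf.1
    obtain ⟨b, hb⟩ := hf.2
    have hab : f ^ (a + b) ∈ C * P := by
      rw [pow_add]; exact Ideal.mul_mem_mul ha hb
    obtain ⟨c, hc⟩ := key hab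
    exact ⟨(a + b) * c, by rwa [pow_mul]⟩
end
end

section
/- Let π ∈ S_n be a permutation with diagram D(π) = {(p,q) : π(p) > q and π⁻¹(q) > p}, and rank function r(p,q) = #{i ≤ p : π(i) ≤ q}. For (i,j) ∈ D(π), there exists (p,q) in the essential set Ess(π) with p < i and q < j if and only if the r(i,j) dots of π in the (i−1)×(j−1) northwest submatrix do not form a diagonal (i.e., it is NOT the case that the positions (a, π(a)) with a ≤ i−1, π(a) ≤ j−1 can be listed with strictly increasing rows and strictly increasing columns simultaneously). -/
open Equiv Finset

/-- `(p,q)` (0-indexed) is a box of the diagram `D(π)`: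
`π(p) > q` and `π⁻¹(q) > p`. -/
def InDiag {n : ℕ} (π : Equiv.Perm (Fin n)) (p q : ℕ) : Prop :=
  ∃ (hp : p < n) (hq : q < n),
    q < (π ⟨p, hp⟩ : ℕ) ∧ p < (π.symm ⟨q, hq⟩ : ℕ)

/-- `(p,q)` is in the essential set `Ess(π)`: a southeast corner of `D(π)`. -/
def InEss {n : ℕ} (π : Equiv.Perm (Fin n)) (p q : ℕ) : Prop :=
  InDiag π p q ∧ ¬ InDiag π (p + 1) q ∧ ¬ InDiag π p (q + 1)

/-- The rank function `r(p,q) = #{i ≤ p : π(i) ≤ q}` (0-indexed). -/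
def rk {n : ℕ} (π : Equiv.Perm (Fin n)) (p q : ℕ) : ℕ :=
  (Finset.univ.filter (fun i : Fin n => (i : ℕ) ≤ p ∧ (π i : ℕ) ≤ q)).card

/-- The dots of `π` strictly northwest of `(i,j)` form a diagonal: any two of them
are ordered strictly northwest-to-southeast. -/
def Diagonalizes {n : ℕ} (π : Equiv.Perm (Fin n)) (i j : ℕ) : Prop :=
  ∀ a b : Fin n, (a : ℕ) < i → (π a : ℕ) < j → (b : ℕ) < i → (π b : ℕ) < j →
    a < b → π a < π b

/-- `π` is vexillary, i.e. 2143-avoiding. -/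
def Vexillary {n : ℕ} (π : Equiv.Perm (Fin n)) : Prop :=
  ¬ ∃ a b c d : Fin n, a < b ∧ b < c ∧ c < d ∧
    π b < π a ∧ π a < π d ∧ π d < π c

/-- `(p,q) ∈ D(π)` is accessible: `r(p,q) ≠ 0` and no box of `D(π)` other than
`(p,q)` itself lies weakly southeast of `(p,q)`. -/
def Accessible {n : ℕ} (π : Equiv.Perm (Fin n)) (p q : Fin n) : Prop :=
  InDiag π p q ∧ rk π p q ≠ 0 ∧
    ∀ i j : ℕ, InDiag π i j → (p : ℕ) ≤ i → (q : ℕ) ≤ j → i = (p : ℕ) ∧ j = (q : ℕ)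

/-- Invariant for the southeast walk: `(p,q)` is a box of the diagram strictly inside
the northwest window, with a dot weakly above and strictly right of it (inside the
window columnwise) and a dot strictly below (inside the window rowwise) and weakly
left of it. -/
def AuxP {n : ℕ} (π : Equiv.Perm (Fin n)) (i j p q : ℕ) : Prop :=
  p < i ∧ q < j ∧ InDiag π p q ∧
  (∃ x : Fin n, (x : ℕ) ≤ p ∧ q < (π x : ℕ) ∧ (π x : ℕ) < j) ∧
  (∃ r : Fin n, p < (r : ℕ) ∧ (r : ℕ) < i ∧ (π r : ℕ) ≤ q)

lemma aux_step {n : ℕ} (π : Equiv.Perm (Fin n)) (i j : ℕ) :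
    ∀ k p q, i + j - (p + q) ≤ k → AuxP π i j p q →
      ∃ p' q', InEss π p' q' ∧ p' < i ∧ q' < j := by
  intro k
  induction k with
  | zero =>
    intro p q hk hP
    obtain ⟨hpi, hqj, _, _, _⟩ := hP
    omega
  | succ k ih =>
    intro p q hk hP
    obtain ⟨hpi, hqj, hDpq, ⟨x, hx1, hx2, hx3⟩, ⟨r, hr1, hr2, hr3⟩⟩ := hP
    by_cases h1 : InDiag π (p + 1) q
    · -- move south
      obtain ⟨hp1, hq', hA, hB⟩ := h1
      -- r ≠ p+1 since π r ≤ q < π ⟨p+1,_⟩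
      have hrne : (r : ℕ) ≠ p + 1 := by
        intro hre
        have : (⟨p + 1, hp1⟩ : Fin n) = r := Fin.ext (by simp [hre])
        rw [this] at hA
        omega
      have hp1i : p + 1 < i := by omega
      apply ih (p + 1) q (by omega)
      exact ⟨hp1i, hqj, ⟨hp1, hq', hA, hB⟩,
        ⟨x, by omega, hx2, hx3⟩, ⟨r, by omega, hr2, hr3⟩⟩
    · by_cases h2 : InDiag π p (q + 1)
      · -- move east
        obtain ⟨hp', hq1, hA, hB⟩ := h2
        -- π x ≠ q+1 since π.symm ⟨q+1,_⟩ > p ≥ x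
        have hxne : (π x : ℕ) ≠ q + 1 := by
          intro hxe
          have hfx : π x = ⟨q + 1, hq1⟩ := Fin.ext (by simp [hxe])
          have : π.symm ⟨q + 1, hq1⟩ = x := by rw [← hfx, Equiv.symm_apply_apply]
          rw [this] at hB
          omega
        have hq1j : q + 1 < j := by omega
        apply ih p (q + 1) (by omega)
        exact ⟨hpi, hq1j, ⟨hp', hq1, hA, hB⟩,
          ⟨x, hx1, by omega, hx3⟩, ⟨r, hr1, hr2, by omega⟩⟩
      · exact ⟨p, q, ⟨hDpq, h1, h2⟩, hpi, hqj⟩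

lemma aux_forward {n : ℕ} (π : Equiv.Perm (Fin n)) (i j p q : ℕ)
    (h : InDiag π i j) (hE : InEss π p q) (hpi : p < i) (hqj : q < j)
    (hd : Diagonalizes π i j) : False := by
  obtain ⟨hi, hj, hπi, hπj⟩ := h
  obtain ⟨⟨hp, hq, hπp, hπq⟩, hnr, hnc⟩ := hE
  have hq1n : q + 1 < n := by omega
  have hp1n : p + 1 < n := by omega
  -- produce a dot X with row ≤ p and column q+1
  have hX : ∃ X : Fin n, (X : ℕ) ≤ p ∧ (π X : ℕ) = q + 1 := by
    by_cases hc : (π ⟨p, hp⟩ : ℕ) = q + 1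
    · exact ⟨⟨p, hp⟩, le_refl _, hc⟩
    · have hgt : q + 1 < (π ⟨p, hp⟩ : ℕ) := by omega
      have hsy : (π.symm ⟨q + 1, hq1n⟩ : ℕ) ≤ p := by
        by_contra hlt
        push_neg at hlt
        exact hnc ⟨hp, hq1n, hgt, hlt⟩
      exact ⟨π.symm ⟨q + 1, hq1n⟩, hsy, by simp⟩
  obtain ⟨X, hX1, hX2⟩ := hX
  -- the column q+1 is strictly less than j
  have hq1j : q + 1 < j := by
    rcases Nat.lt_or_ge (q + 1) j with hlt | hge
    · exact hlt
    · exfalso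
      have hqe : q + 1 = j := by omega
      have hfx : π X = ⟨j, hj⟩ := Fin.ext (by simp [hX2, hqe])
      have : π.symm ⟨j, hj⟩ = X := by rw [← hfx, Equiv.symm_apply_apply]
      rw [this] at hπj
      omega
  -- produce a dot Y in row p+1 with column ≤ q
  have hY : (π ⟨p + 1, hp1n⟩ : ℕ) ≤ q := by
    by_cases hc : (π.symm ⟨q, hq⟩ : ℕ) = p + 1
    · have hfy : π.symm ⟨q, hq⟩ = ⟨p + 1, hp1n⟩ := Fin.ext (by simp [hc])
      have : π ⟨p + 1, hp1n⟩ = ⟨q, hq⟩ := by rw [← hfy, Equiv.apply_symm_apply]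
      simp [this]
    · have hgt : p + 1 < (π.symm ⟨q, hq⟩ : ℕ) := by omega
      by_contra hlt
      push_neg at hlt
      exact hnr ⟨hp1n, hq, hlt, hgt⟩
  -- row p+1 is strictly less than i
  have hp1i : p + 1 < i := by
    rcases Nat.lt_or_ge (p + 1) i with hlt | hge
    · exact hlt
    · exfalso
      have hpe : p + 1 = i := by omega
      have : (⟨p + 1, hp1n⟩ : Fin n) = ⟨i, hi⟩ := Fin.ext (by simp [hpe])
      rw [this] at hY
      omega
  -- apply the diagonal hypothesis to X and ⟨p+1, _⟩
  have := hd X ⟨p + 1, hp1n⟩ (by omega) (by omega) (by exact hp1i)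
    (by exact lt_of_le_of_lt hY hqj) (by rw [Fin.lt_def]; show (X : ℕ) < p + 1; omega)
  rw [Fin.lt_def] at this
  omega

/-- For `(i,j) ∈ D(π)`, there exists `(p,q) ∈ Ess(π)` strictly northwest of `(i,j)`
if and only if the dots of `π` in the northwest `(i-1)×(j-1)` submatrix do not form
a diagonal. -/
theorem stmt_7 {n : ℕ} (π : Equiv.Perm (Fin n)) (i j : ℕ) (h : InDiag π i j) :
    (∃ p q : ℕ, InEss π p q ∧ p < i ∧ q < j) ↔ ¬ Diagonalizes π i j := by
  constructor
  · rintro ⟨p, q, hE, hpi, hqj⟩ hd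
    exact aux_forward π i j p q h hE hpi hqj hd
  · intro hd
    rw [Diagonalizes] at hd
    push_neg at hd
    obtain ⟨a, b, hai, haj, hbi, hbj, hab, hba⟩ := hd
    have hne : π b ≠ π a := fun he => absurd (π.injective he) (by
      intro hba'; rw [hba'] at hab; exact lt_irrefl _ hab)
    have hba' : π b < π a := lt_of_le_of_ne hba hne
    rw [Fin.lt_def] at hba' hab
    -- the initial box (a, π b) of the diagram, with witnesses
    have hD : InDiag π (a : ℕ) ((π b : ℕ)) := by
      refine ⟨a.isLt, (π b).isLt, ?_, ?_⟩
      · have : (⟨(a : ℕ), a.isLt⟩ : Fin n) = a := Fin.ext rfl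
        rw [this]; exact hba'
      · have : (⟨((π b : ℕ)), (π b).isLt⟩ : Fin n) = π b := Fin.ext rfl
        rw [this, Equiv.symm_apply_apply]; exact hab
    exact aux_step π i j (i + j) (a : ℕ) ((π b : ℕ)) (by omega)
      ⟨by omega, by omega, hD, ⟨a, le_refl _, hba', haj⟩, ⟨b, hab, hbi, le_refl _⟩⟩
end

section
/- For a permutation π ∈ S_n, the following are equivalent: (a) π is vexillary (2143-avoiding), i.e., there do not exist a < b < c < d with π(b) < π(a) < π(d) < π(c); (b) there do not exist (p,q), (i,j) ∈ Ess(π) with p < i and q < j; (c) for every (p,q) ∈ D(π), the r(p,q) dots of π in the northwest (p−1)×(q−1) submatrix form a diagonal of size r(p,q). -/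
open Equiv Finset

-- rank lemma
lemma rk_eq {n : ℕ} (π : Equiv.Perm (Fin n)) (p q : ℕ) (h : InDiag π p q) :
    (Finset.univ.filter (fun a : Fin n => (a : ℕ) < p ∧ (π a : ℕ) < q)).card = rk π p q := by
  obtain ⟨hp, hq, h1, h2⟩ := h
  unfold rk
  congr 1
  ext a
  simp only [mem_filter, mem_univ, true_and]
  constructor
  · rintro ⟨ha, hb⟩; exact ⟨ha.le, hb.le⟩
  · rintro ⟨ha, hb⟩
    have hane : (a : ℕ) ≠ p := by
      intro he
      have : a = ⟨p, hp⟩ := Fin.ext he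
      rw [this] at hb; omega
    have hbne : (π a : ℕ) ≠ q := by
      intro he
      have : π a = ⟨q, hq⟩ := Fin.ext he
      have ha' : a = π.symm ⟨q, hq⟩ := by rw [← this, Equiv.symm_apply_apply]
      rw [ha'] at ha; omega
    omega

lemma toEssGen {n : ℕ} (π : Equiv.Perm (Fin n)) (x₀ y₀ X Y : ℕ)
    (hX : ∀ y, y₀ ≤ y → y < Y → ¬ InDiag π X y)
    (hY : ∀ x, x₀ ≤ x → x < X → ¬ InDiag π x Y) :
    ∀ m x y, X + Y ≤ x + y + m → InDiag π x y → x₀ ≤ x → x < X → y₀ ≤ y → y < Y →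
      ∃ x' y', InEss π x' y' ∧ x ≤ x' ∧ x' < X ∧ y ≤ y' ∧ y' < Y := by
  intro m
  induction m with
  | zero => intro x y hm _ _ hx _ hy; omega
  | succ m ih =>
    intro x y hm hD hx0 hx hy0 hy
    by_cases h1 : InDiag π (x + 1) y
    · have hx1 : x + 1 < X := by
        rcases Nat.lt_or_ge (x + 1) X with h | h
        · exact h
        · exfalso
          have hXe : X = x + 1 := by omega
          exact hX y hy0 hy (hXe ▸ h1)
      obtain ⟨x', y', hE, h3, h4, h5, h6⟩ := ih (x + 1) y (by omega) h1 (by omega) hx1 hy0 hy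
      exact ⟨x', y', hE, by omega, h4, h5, h6⟩
    · by_cases h2 : InDiag π x (y + 1)
      · have hy1 : y + 1 < Y := by
          rcases Nat.lt_or_ge (y + 1) Y with h | h
          · exact h
          · exfalso
            have hYe : Y = y + 1 := by omega
            exact hY x hx0 hx (hYe ▸ h2)
        obtain ⟨x', y', hE, h3, h4, h5, h6⟩ := ih x (y + 1) (by omega) h2 hx0 hx (by omega) hy1
        exact ⟨x', y', hE, h3, h4, by omega, h6⟩
      · exact ⟨x, y, ⟨hD, h1, h2⟩, le_rfl, hx, le_rfl, hy⟩

lemma vex_to_diag {n : ℕ} (π : Equiv.Perm (Fin n)) (hv : Vexillary π) :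
    ∀ p q, InDiag π p q → Diagonalizes π p q := by
  rintro p q ⟨hp, hq, h1, h2⟩ a b ha hπa hb hπb hab
  by_contra hc
  have hne : π b ≠ π a := fun h => absurd (π.injective h) hab.ne'
  have hba : π b < π a := lt_of_le_of_ne (not_lt.mp hc) hne
  exact hv ⟨a, b, ⟨p, hp⟩, π.symm ⟨q, hq⟩, hab,
    Fin.lt_def.mpr hb, Fin.lt_def.mpr h2, hba,
    by rw [Equiv.apply_symm_apply]; exact Fin.lt_def.mpr hπa,
    by rw [Equiv.apply_symm_apply]; exact Fin.lt_def.mpr h1⟩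

lemma diag_to_vex {n : ℕ} (π : Equiv.Perm (Fin n))
    (h : ∀ p q, InDiag π p q → Diagonalizes π p q) : Vexillary π := by
  rintro ⟨a, b, c, d, hab, hbc, hcd, h1, h2, h3⟩
  have hD : InDiag π (c : ℕ) ((π d : Fin n) : ℕ) := by
    refine ⟨c.isLt, (π d).isLt, ?_, ?_⟩
    · simp only [Fin.eta]; exact Fin.lt_def.mp h3
    · simp only [Fin.eta, Equiv.symm_apply_apply]; exact Fin.lt_def.mp hcd
  have := h (c : ℕ) ((π d : Fin n) : ℕ) hD a b
    (Fin.lt_def.mp (hab.trans hbc)) (Fin.lt_def.mp h2)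
    (Fin.lt_def.mp hbc) (Fin.lt_def.mp (h1.trans h2)) hab
  exact absurd this (lt_asymm h1)

lemma b_to_diag {n : ℕ} (π : Equiv.Perm (Fin n))
    (hB : ¬ ∃ p q i j : ℕ, InEss π p q ∧ InEss π i j ∧ p < i ∧ q < j) :
    ∀ p q, InDiag π p q → Diagonalizes π p q := by
  intro p q hD a b ha hπa hb hπb hab
  by_contra hc
  obtain ⟨hp, hq, _, _⟩ := hD
  have hne : (π b : ℕ) ≠ (π a : ℕ) := by
    intro h
    exact absurd (π.injective (Fin.ext h)) hab.ne'
  have hba : (π b : ℕ) < (π a : ℕ) := by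
    have := Fin.lt_def.not.mp hc; omega
  have hD1 : InDiag π ((a : Fin n) : ℕ) ((π b : Fin n) : ℕ) := by
    refine ⟨a.isLt, (π b).isLt, ?_, ?_⟩
    · simp only [Fin.eta]; exact hba
    · simp only [Fin.eta, Equiv.symm_apply_apply]; exact Fin.lt_def.mp hab
  have hX : ∀ y, (π b : ℕ) ≤ y → y < (π a : ℕ) → ¬ InDiag π (b : ℕ) y := by
    rintro y hy1 hy2 ⟨hbn, hyn, hlt, _⟩
    simp only [Fin.eta] at hlt; omega
  have hY : ∀ x, (a : ℕ) ≤ x → x < (b : ℕ) → ¬ InDiag π x ((π a : Fin n) : ℕ) := by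
    rintro x hx1 hx2 ⟨hxn, hπan, _, hlt⟩
    simp only [Fin.eta, Equiv.symm_apply_apply] at hlt; omega
  obtain ⟨p₁, q₁, hE1, h11, h12, h13, h14⟩ :=
    toEssGen π (a : ℕ) ((π b : Fin n) : ℕ) (b : ℕ) ((π a : Fin n) : ℕ) hX hY
      ((b : ℕ) + ((π a : Fin n) : ℕ)) (a : ℕ) ((π b : Fin n) : ℕ)
      (by omega) hD1 le_rfl (Fin.lt_def.mp hab) le_rfl hba
  obtain ⟨p₂, q₂, hE2, h21, h22, h23, h24⟩ :=
    toEssGen π 0 0 n n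
      (fun y _ _ hD' => by obtain ⟨h, _⟩ := hD'; omega)
      (fun x _ _ hD' => by obtain ⟨_, h, _⟩ := hD'; omega)
      (2 * n) p q (by omega) (⟨hp, hq, ‹_›, ‹_›⟩) (Nat.zero_le _) hp (Nat.zero_le _) hq
  exact hB ⟨p₁, q₁, p₂, q₂, hE1, hE2, by omega, by omega⟩

lemma vex_to_b {n : ℕ} (π : Equiv.Perm (Fin n)) (hv : Vexillary π) :
    ¬ ∃ p q i j : ℕ, InEss π p q ∧ InEss π i j ∧ p < i ∧ q < j := by
  rintro ⟨p, q, i, j, ⟨⟨hp, hq, hπp, hπq⟩, h1, h2⟩, ⟨⟨hi, hj, hπi, hπj⟩, _, _⟩, hpi, hqj⟩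
  have hp1 : p + 1 < n := by omega
  have hq1 : q + 1 < n := by omega
  have h2' : (π ⟨p, hp⟩ : ℕ) ≤ q + 1 ∨ (π.symm ⟨q + 1, hq1⟩ : ℕ) ≤ p := by
    by_contra hcon
    push_neg at hcon
    exact h2 ⟨hp, hq1, hcon.1, hcon.2⟩
  have h1' : (π ⟨p + 1, hp1⟩ : ℕ) ≤ q ∨ (π.symm ⟨q, hq⟩ : ℕ) ≤ p + 1 := by
    by_contra hcon
    push_neg at hcon
    exact h1 ⟨hp1, hq, hcon.1, hcon.2⟩
  set a : Fin n := π.symm ⟨q + 1, hq1⟩ with ha_def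
  have haπ : π a = ⟨q + 1, hq1⟩ := π.apply_symm_apply _
  have hap : (a : ℕ) ≤ p := by
    rcases h2' with h | h
    · have he : π ⟨p, hp⟩ = ⟨q + 1, hq1⟩ := Fin.ext (show (π ⟨p, hp⟩ : ℕ) = q + 1 by omega)
      have ha' : a = ⟨p, hp⟩ := by rw [ha_def, ← he, Equiv.symm_apply_apply]
      rw [ha']
    · exact h
  have hqj' : q + 1 < j := by
    rcases Nat.lt_or_ge (q + 1) j with h | h
    · exact h
    · exfalso
      have he : (⟨q + 1, hq1⟩ : Fin n) = ⟨j, hj⟩ := Fin.ext (show q + 1 = j by omega)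
      rw [ha_def, he] at hap
      omega
  have hbex : ∃ b : Fin n, (a : ℕ) < b ∧ (b : ℕ) < i ∧ (π b : ℕ) ≤ q := by
    rcases h1' with h | h
    · refine ⟨⟨p + 1, hp1⟩, show (a : ℕ) < p + 1 by omega, ?_, h⟩
      have hne : p + 1 ≠ i := by
        intro he
        have he' : (⟨p + 1, hp1⟩ : Fin n) = ⟨i, hi⟩ := Fin.ext he
        rw [he'] at h; omega
      show p + 1 < i
      omega
    · refine ⟨π.symm ⟨q, hq⟩, by omega, ?_, by rw [Equiv.apply_symm_apply]⟩
      have : (π.symm ⟨q, hq⟩ : ℕ) ≠ i := by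
        intro he
        have he' : π.symm ⟨q, hq⟩ = ⟨i, hi⟩ := Fin.ext he
        have hiq : π ⟨i, hi⟩ = ⟨q, hq⟩ := by rw [← he', Equiv.apply_symm_apply]
        have hiq' : (π ⟨i, hi⟩ : ℕ) = q := by rw [hiq]
        omega
      omega
  obtain ⟨b, hab, hbi, hπb⟩ := hbex
  refine hv ⟨a, b, ⟨i, hi⟩, π.symm ⟨j, hj⟩, Fin.lt_def.mpr hab, Fin.lt_def.mpr hbi,
    Fin.lt_def.mpr hπj, ?_, ?_, ?_⟩
  · rw [haπ]; exact Fin.lt_def.mpr (show (π b : ℕ) < q + 1 by omega)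
  · rw [haπ, Equiv.apply_symm_apply]; exact Fin.lt_def.mpr (show q + 1 < j from hqj')
  · rw [Equiv.apply_symm_apply]; exact Fin.lt_def.mpr hπi


/-- Equivalent characterizations of vexillary permutations:
(a) 2143-avoiding; (b) no element of `Ess(π)` is strictly northwest of another;
(c) for every `(p,q) ∈ D(π)`, the dots of `π` in the northwest `(p-1)×(q-1)`
submatrix form a diagonal of size `r(p,q)`. -/
theorem stmt_8 {n : ℕ} (π : Equiv.Perm (Fin n)) :
    (Vexillary π ↔
      ¬ ∃ p q i j : ℕ, InEss π p q ∧ InEss π i j ∧ p < i ∧ q < j) ∧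
    (Vexillary π ↔
      ∀ p q : ℕ, InDiag π p q →
        Diagonalizes π p q ∧
          (Finset.univ.filter
            (fun a : Fin n => (a : ℕ) < p ∧ (π a : ℕ) < q)).card = rk π p q) := by
  constructor
  · exact ⟨vex_to_b π, fun hB => diag_to_vex π (b_to_diag π hB)⟩
  · constructor
    · intro hv p q hD
      exact ⟨vex_to_diag π hv p q hD, rk_eq π p q hD⟩
    · intro h
      exact diag_to_vex π (fun p q hD => (h p q hD).1)
end

section
/- Let π be a vexillary permutation with accessible box (p,q) ∈ Ess(π) (meaning r(p,q) ≠ 0 and no box of D(π) other than (p,q) lies weakly southeast of (p,q)), and let π_P = π ∘ (p, π⁻¹(q)) be the permutation obtained by composing with the transposition swapping rows p and π⁻¹(q). Then D(π_P) = D(π) \ {(p,q)}. -/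
open Equiv Finset

/-- For a vexillary `π` with accessible box `(p,q) ∈ Ess(π)`, the permutation
`π_P = π ∘ (p, π⁻¹(q))` (switching rows `p` and `π⁻¹(q)`) satisfies
`D(π_P) = D(π) \ {(p,q)}`. -/
theorem stmt_9 {n : ℕ} (π : Equiv.Perm (Fin n)) (hvex : Vexillary π)
    (p q : Fin n) (hEss : InEss π p q) (hacc : Accessible π p q) :
    ∀ i j : ℕ,
      InDiag (π * Equiv.swap p (π.symm q)) i j ↔
        InDiag π i j ∧ ¬ (i = (p : ℕ) ∧ j = (q : ℕ)) := by
  obtain ⟨⟨hpn, hqn, h1, h2⟩, -, hse⟩ := hacc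
  simp only [Fin.eta] at h1 h2
  set p' : Fin n := π.symm q with hp'def
  set σ : Equiv.Perm (Fin n) := π * Equiv.swap p p' with hσdef
  have hπp' : π p' = q := π.apply_symm_apply q
  have hpp' : (p : ℕ) < (p' : ℕ) := h2
  have hppne : p ≠ p' := fun h => by simp [h] at hpp'
  have hσapp : ∀ x, σ x = π (Equiv.swap p p' x) := fun x => rfl
  have hσsymm : ∀ y, σ.symm y = Equiv.swap p p' (π.symm y) := by
    intro y
    rw [hσdef, Equiv.Perm.mul_def, Equiv.symm_trans_apply, Equiv.symm_swap]
  have hse' : ∀ I J : Fin n, (J : ℕ) < (π I : ℕ) → (I : ℕ) < (π.symm J : ℕ) →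
      (p : ℕ) ≤ (I : ℕ) → (q : ℕ) ≤ (J : ℕ) → ((I : ℕ) = (p : ℕ) ∧ (J : ℕ) = (q : ℕ)) := by
    intro I J hIJ hJI hpI hqJ
    exact hse I J ⟨I.isLt, J.isLt, by simpa using hIJ, by simpa using hJI⟩ hpI hqJ
  have F1 : ∀ J : Fin n, (q : ℕ) < (J : ℕ) → (J : ℕ) < (π p : ℕ) →
      (p : ℕ) < (π.symm J : ℕ) → False := by
    intro J h hj hs
    have := (hse' p J hj hs le_rfl h.le).2
    omega
  have F2 : ∀ I : Fin n, (p : ℕ) < (I : ℕ) → (q : ℕ) < (π I : ℕ) →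
      (I : ℕ) < (p' : ℕ) → False := by
    intro I h hj hs
    have := (hse' I q hj hs h.le le_rfl).1
    omega
  have key : ∀ I J : Fin n,
      ((J : ℕ) < (σ I : ℕ) ∧ (I : ℕ) < (σ.symm J : ℕ)) ↔
      (((J : ℕ) < (π I : ℕ) ∧ (I : ℕ) < (π.symm J : ℕ)) ∧
        ¬((I : ℕ) = (p : ℕ) ∧ (J : ℕ) = (q : ℕ))) := by
    intro I J
    rw [hσapp I, hσsymm J]
    rcases eq_or_ne J q with rfl | hJq
    · rw [show π.symm J = p' from rfl, Equiv.swap_apply_right]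
      rcases eq_or_ne I p with rfl | hIp
      · rw [Equiv.swap_apply_left, hπp']
        simp
      · have hIpv : (I : ℕ) ≠ (p : ℕ) := fun e => hIp (Fin.ext e)
        rcases eq_or_ne I p' with rfl | hIp'
        · rw [Equiv.swap_apply_right]
          constructor
          · rintro ⟨-, h⟩; omega
          · rintro ⟨⟨-, h⟩, -⟩; omega
        · rw [Equiv.swap_apply_of_ne_of_ne hIp hIp']
          constructor
          · rintro ⟨ha, hb⟩
            exact ⟨⟨ha, hb.trans hpp'⟩, fun h => hIpv h.1⟩
          · rintro ⟨⟨ha, hb⟩, -⟩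
            refine ⟨ha, ?_⟩
            rcases lt_trichotomy (I : ℕ) (p : ℕ) with h | h | h
            · exact h
            · exact absurd h hIpv
            · exact absurd (F2 I h ha hb) id
    · have hJqv : (J : ℕ) ≠ (q : ℕ) := fun e => hJq (Fin.ext e)
      have hJp' : π.symm J ≠ p' := fun e => hJq (by rw [← π.apply_symm_apply J, e, hπp'])
      rcases eq_or_ne (π.symm J) p with hJp | hJp
      · have hJval : (J : ℕ) = (π p : ℕ) := by rw [← π.apply_symm_apply J, hJp]
        rw [hJp, Equiv.swap_apply_left]
        rcases eq_or_ne I p with rfl | hIp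
        · rw [Equiv.swap_apply_left, hπp']
          constructor
          · rintro ⟨ha, -⟩; omega
          · rintro ⟨⟨-, hb⟩, -⟩; omega
        · have hIpv : (I : ℕ) ≠ (p : ℕ) := fun e => hIp (Fin.ext e)
          rcases eq_or_ne I p' with rfl | hIp'
          · rw [Equiv.swap_apply_right]
            constructor
            · rintro ⟨-, hb⟩; omega
            · rintro ⟨⟨-, hb⟩, -⟩; omega
          · rw [Equiv.swap_apply_of_ne_of_ne hIp hIp']
            constructor
            · rintro ⟨ha, hb⟩
              refine ⟨⟨ha, ?_⟩, fun h => hIpv h.1⟩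
              rcases lt_trichotomy (I : ℕ) (p : ℕ) with h | h | h
              · exact h
              · exact absurd h hIpv
              · exact absurd (F2 I h (by omega) hb) id
            · rintro ⟨⟨ha, hb⟩, -⟩
              exact ⟨ha, hb.trans hpp'⟩
      · rw [Equiv.swap_apply_of_ne_of_ne hJp hJp']
        rcases eq_or_ne I p with rfl | hIp
        · rw [Equiv.swap_apply_left, hπp']
          constructor
          · rintro ⟨ha, hb⟩
            exact ⟨⟨by omega, hb⟩, fun h => hJqv h.2⟩
          · rintro ⟨⟨ha, hb⟩, -⟩
            refine ⟨?_, hb⟩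
            rcases lt_trichotomy (J : ℕ) (q : ℕ) with h | h | h
            · exact h
            · exact absurd h hJqv
            · exact absurd (F1 J h ha hb) id
        · have hIpv : (I : ℕ) ≠ (p : ℕ) := fun e => hIp (Fin.ext e)
          rcases eq_or_ne I p' with rfl | hIp'
          · rw [Equiv.swap_apply_right, hπp']
            constructor
            · rintro ⟨ha, hb⟩
              refine ⟨⟨?_, hb⟩, fun h => hIpv h.1⟩
              rcases lt_trichotomy (J : ℕ) (q : ℕ) with h | h | h
              · exact h
              · exact absurd h hJqv
              · exact absurd (F1 J h ha (by omega)) id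
            · rintro ⟨⟨ha, hb⟩, -⟩
              exact ⟨by omega, hb⟩
          · rw [Equiv.swap_apply_of_ne_of_ne hIp hIp']
            constructor
            · rintro ⟨ha, hb⟩
              exact ⟨⟨ha, hb⟩, fun h => hIpv h.1⟩
            · rintro ⟨⟨ha, hb⟩, -⟩
              exact ⟨ha, hb⟩
  intro i j
  constructor
  · rintro ⟨hi, hj, ha, hb⟩
    obtain ⟨⟨c1, c2⟩, c3⟩ := (key ⟨i, hi⟩ ⟨j, hj⟩).1 ⟨ha, hb⟩
    exact ⟨⟨hi, hj, c1, c2⟩, fun h => c3 h⟩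
  · rintro ⟨⟨hi, hj, c1, c2⟩, hne2⟩
    obtain ⟨a, b⟩ := (key ⟨i, hi⟩ ⟨j, hj⟩).2 ⟨⟨c1, c2⟩, fun h => hne2 h⟩
    exact ⟨hi, hj, a, b⟩
end

section
/- Let π be vexillary with accessible box (p,q) ∈ Ess(π), π_P = π ∘ (p, π⁻¹(q)). Then the rank function of π_P satisfies r_P(i,j) = r(i,j) + 1 if p ≤ i ≤ π⁻¹(q) − 1 and q ≤ j ≤ π(p) − 1, and r_P(i,j) = r(i,j) otherwise. -/
open Equiv Finset

lemma card_filter_aux {α : Type*} [Fintype α] [DecidableEq α] (P Q : α → Prop)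
    [DecidablePred P] [DecidablePred Q] (a b : α) (hab : a ≠ b)
    (h : ∀ x, x ≠ a → x ≠ b → (P x ↔ Q x)) :
    (Finset.univ.filter P).card + ((if Q a then 1 else 0) + (if Q b then 1 else 0)) =
    (Finset.univ.filter Q).card + ((if P a then 1 else 0) + (if P b then 1 else 0)) := by
  classical
  rw [Finset.card_filter, Finset.card_filter]
  rw [← Finset.sum_erase_add Finset.univ (fun x => if P x then 1 else 0) (Finset.mem_univ a),
      ← Finset.sum_erase_add Finset.univ (fun x => if Q x then 1 else 0) (Finset.mem_univ a)]
  rw [← Finset.sum_erase_add _ (fun x => if P x then 1 else 0)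
        (Finset.mem_erase.mpr ⟨hab.symm, Finset.mem_univ b⟩),
      ← Finset.sum_erase_add _ (fun x => if Q x then 1 else 0)
        (Finset.mem_erase.mpr ⟨hab.symm, Finset.mem_univ b⟩)]
  have heq : ∀ x ∈ (Finset.univ.erase a).erase b,
      (if P x then 1 else 0) = (if Q x then 1 else 0) := by
    intro x hx
    simp only [Finset.mem_erase] at hx
    simp [h x hx.2.1 hx.1]
  rw [Finset.sum_congr rfl heq]
  ring

/-- For a vexillary `π` with accessible box `(p,q) ∈ Ess(π)` and
`π_P = π ∘ (p, π⁻¹(q))`, the rank function satisfies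
`r_P(i,j) = r(i,j) + 1` if `p ≤ i ≤ π⁻¹(q) - 1` and `q ≤ j ≤ π(p) - 1`,
and `r_P(i,j) = r(i,j)` otherwise. -/
theorem stmt_10 {n : ℕ} (π : Equiv.Perm (Fin n)) (hvex : Vexillary π)
    (p q : Fin n) (hEss : InEss π p q) (hacc : Accessible π p q) :
    ∀ i j : ℕ,
      rk (π * Equiv.swap p (π.symm q)) i j =
        if (p : ℕ) ≤ i ∧ i ≤ (π.symm q : ℕ) - 1 ∧ (q : ℕ) ≤ j ∧ j ≤ (π p : ℕ) - 1
        then rk π i j + 1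
        else rk π i j := by
  intro i j
  obtain ⟨⟨hp, hq', hπp, hπq⟩, _, _⟩ := hacc
  simp only [Fin.eta] at hπp hπq
  set b : Fin n := π.symm q with hb
  have hab : p ≠ b := by
    intro h
    rw [← h] at hπq
    exact lt_irrefl _ hπq
  have hswap : ∀ x : Fin n, x ≠ p → x ≠ b → Equiv.swap p b x = x := fun x h1 h2 =>
    Equiv.swap_apply_of_ne_of_ne h1 h2
  have key := card_filter_aux (fun x : Fin n => (x : ℕ) ≤ i ∧ ((π * Equiv.swap p b) x : ℕ) ≤ j)
    (fun x : Fin n => (x : ℕ) ≤ i ∧ (π x : ℕ) ≤ j) p b hab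
    (fun x h1 h2 => by
      simp only [Equiv.Perm.mul_apply, hswap x h1 h2])
  have hPa : ((π * Equiv.swap p b) p : ℕ) = (q : ℕ) := by
    simp [Equiv.Perm.mul_apply, Equiv.swap_apply_left, hb]
  have hPb : ((π * Equiv.swap p b) b : ℕ) = (π p : ℕ) := by
    simp [Equiv.Perm.mul_apply, Equiv.swap_apply_right]
  have hπb : ((π b : Fin n) : ℕ) = (q : ℕ) := by simp [hb]
  simp only [hPa, hPb, hπb] at key
  show rk (π * Equiv.swap p b) i j = _
  unfold rk at *
  have hcond : ((p : ℕ) ≤ i ∧ i ≤ (b : ℕ) - 1 ∧ (q : ℕ) ≤ j ∧ j ≤ ((π p : Fin n) : ℕ) - 1) ↔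
      ((p : ℕ) ≤ i ∧ i < (b : ℕ) ∧ (q : ℕ) ≤ j ∧ j < ((π p : Fin n) : ℕ)) := by
    constructor <;> rintro ⟨a1, a2, a3, a4⟩ <;> exact ⟨a1, by omega, a3, by omega⟩
  simp only [hcond]
  by_cases h1 : (p : ℕ) ≤ i <;> by_cases h2 : (b : ℕ) ≤ i <;>
    by_cases h3 : (q : ℕ) ≤ j <;> by_cases h4 : ((π p : ℕ)) ≤ j <;>
    simp only [h1, h2, h3, h4, if_true, if_false, and_true, and_false, true_and, false_and,
      if_pos, if_neg, not_false_iff] at key ⊢ <;>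
    first
      | omega
      | (split_ifs with hc <;> omega)
      | (exfalso; omega)
end

section
/- Let π be vexillary, (p,q) ∈ Ess(π) accessible, and (t, π(t)) the dot of π at position (a−1, b−1) where (a,b) is the northwest corner of the connected component of D(π) containing (p,q). Set π_C = π ∘ (p, π⁻¹(q)) ∘ (t, p). Then Ess(π_C) = (Ess(π) \ {(p,q)}) ∪ {(p−1, q−1)}. -/
open Equiv Finset

/-- Two boxes of the diagram `D(π)` are adjacent (share an edge). -/
def DiagAdj {n : ℕ} (π : Equiv.Perm (Fin n)) (x y : ℕ × ℕ) : Prop :=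
  InDiag π x.1 x.2 ∧ InDiag π y.1 y.2 ∧
    ((x.1 = y.1 ∧ (x.2 = y.2 + 1 ∨ y.2 = x.2 + 1)) ∨
     (x.2 = y.2 ∧ (x.1 = y.1 + 1 ∨ y.1 = x.1 + 1)))

/-- Two boxes lie in the same connected component of `D(π)`. -/
def SameComp {n : ℕ} (π : Equiv.Perm (Fin n)) : ℕ × ℕ → ℕ × ℕ → Prop :=
  Relation.ReflTransGen (DiagAdj π)

/-! ### Auxiliary machinery -/

/-- The extension of a permutation of `Fin n` to a function `ℕ → ℕ` (identity above `n`). -/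
def fext {n : ℕ} (π : Equiv.Perm (Fin n)) (i : ℕ) : ℕ :=
  if h : i < n then ((π ⟨i, h⟩ : Fin n) : ℕ) else i

lemma fext_eq {n : ℕ} (π : Equiv.Perm (Fin n)) {i : ℕ} (h : i < n) :
    fext π i = ((π ⟨i, h⟩ : Fin n) : ℕ) := dif_pos h

lemma fext_coe {n : ℕ} (π : Equiv.Perm (Fin n)) (x : Fin n) :
    fext π (x : ℕ) = (π x : ℕ) := by
  rw [fext_eq π x.isLt]

lemma fext_fext {n : ℕ} (π : Equiv.Perm (Fin n)) (i : ℕ) :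
    fext π.symm (fext π i) = i := by
  by_cases h : i < n
  · rw [fext_eq π h, fext_coe π.symm, Equiv.symm_apply_apply]
  · have h1 : fext π i = i := dif_neg h
    rw [h1, fext, dif_neg h]

lemma inDiag_iff {n : ℕ} (π : Equiv.Perm (Fin n)) (i j : ℕ) :
    InDiag π i j ↔ i < n ∧ j < n ∧ j < fext π i ∧ i < fext π.symm j := by
  constructor
  · rintro ⟨hi, hj, h1, h2⟩
    exact ⟨hi, hj, by rw [fext_eq π hi]; exact h1, by rw [fext_eq π.symm hj]; exact h2⟩
  · rintro ⟨hi, hj, h1, h2⟩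
    exact ⟨hi, hj, by rwa [fext_eq π hi] at h1, by rwa [fext_eq π.symm hj] at h2⟩

lemma sameComp_inDiag {n : ℕ} {π : Equiv.Perm (Fin n)} {x y : ℕ × ℕ}
    (h : SameComp π x y) (hy : InDiag π y.1 y.2) : InDiag π x.1 x.2 := by
  rcases (Relation.ReflTransGen.cases_head h) with rfl | ⟨z, hz, _⟩
  · exact hy
  · exact hz.1

lemma sameComp_rec {n : ℕ} {π : Equiv.Perm (Fin n)} (S : ℕ × ℕ → Prop)
    (hstep : ∀ x y, DiagAdj π x y → S x → S y) {u v : ℕ × ℕ}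
    (h : SameComp π u v) (hu : S u) : S v := by
  induction h with
  | refl => exact hu
  | tail h1 h2 ih => exact hstep _ _ h2 ih

set_option maxHeartbeats 4000000 in
/-- For a vexillary `π` with accessible box `(p,q) ∈ Ess(π)`, let `(a,b)` be the
northwest corner of the connected component of `D(π)` containing `(p,q)` and
`(t, π(t)) = (a-1, b-1)` the dot of `π` adjacent to it.  Then for
`π_C = π ∘ (p, π⁻¹(q)) ∘ (t, p)` one has
`Ess(π_C) = (Ess(π) \ {(p,q)}) ∪ {(p-1, q-1)}`. -/
theorem stmt_11 {n : ℕ} (π : Equiv.Perm (Fin n)) (hvex : Vexillary π)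
    (p q : Fin n) (hEss : InEss π p q) (hacc : Accessible π p q)
    (a b : ℕ) (hco : SameComp π (a, b) ((p : ℕ), (q : ℕ)))
    (hnw : ∀ x y : ℕ, SameComp π (x, y) ((p : ℕ), (q : ℕ)) → a ≤ x ∧ b ≤ y)
    (t : Fin n) (ht : (t : ℕ) + 1 = a) (hπt : (π t : ℕ) + 1 = b) :
    ∀ i j : ℕ,
      InEss (π * Equiv.swap p (π.symm q) * Equiv.swap t p) i j ↔
        ((InEss π i j ∧ ¬ (i = (p : ℕ) ∧ j = (q : ℕ))) ∨
          (i + 1 = (p : ℕ) ∧ j + 1 = (q : ℕ))) := by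
  have hnwpq := hnw (p : ℕ) (q : ℕ) Relation.ReflTransGen.refl
  have hPn : (p : ℕ) < n := p.isLt
  have hQn : (q : ℕ) < n := q.isLt
  have hQ'n : ((π.symm q : Fin n) : ℕ) < n := (π.symm q).isLt
  have hCn : ((π p : Fin n) : ℕ) < n := (π p).isLt
  have hBn : ((π t : Fin n) : ℕ) < n := (π t).isLt
  have hTn : (t : ℕ) < n := t.isLt
  have hTP : (t : ℕ) < (p : ℕ) := by omega
  have hBQ : ((π t : Fin n) : ℕ) < (q : ℕ) := by omega
  have hFT : fext π (t : ℕ) = ((π t : Fin n) : ℕ) := fext_coe π t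
  have hFP : fext π (p : ℕ) = ((π p : Fin n) : ℕ) := fext_coe π p
  have hGQ : fext π.symm (q : ℕ) = ((π.symm q : Fin n) : ℕ) := fext_coe π.symm q
  have hGB : fext π.symm ((π t : Fin n) : ℕ) = (t : ℕ) := by
    rw [fext_coe π.symm (π t), Equiv.symm_apply_apply]
  have hGC : fext π.symm ((π p : Fin n) : ℕ) = (p : ℕ) := by
    rw [fext_coe π.symm (π p), Equiv.symm_apply_apply]
  have hFQ' : fext π ((π.symm q : Fin n) : ℕ) = (q : ℕ) := by
    rw [fext_coe π (π.symm q), Equiv.apply_symm_apply]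
  have hFG : ∀ y, fext π (fext π.symm y) = y := by
    intro y
    have := fext_fext π.symm y
    rwa [Equiv.symm_symm] at this
  obtain ⟨hDpq0, hNE1, hNE2⟩ := hEss
  obtain ⟨_, _, hd1, hd2⟩ := (inDiag_iff π (p : ℕ) (q : ℕ)).1 hDpq0
  have hQC : (q : ℕ) < ((π p : Fin n) : ℕ) := by rw [hFP] at hd1; exact hd1
  have hPQ' : (p : ℕ) < ((π.symm q : Fin n) : ℕ) := by rw [hGQ] at hd2; exact hd2
  -- the hook lemmas
  have H1 : ∀ i : ℕ, (t : ℕ) < i → i ≤ (p : ℕ) → (q : ℕ) < fext π i := by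
    intro i hti hip
    rcases hip.lt_or_eq with hlt | rfl
    · by_contra hcon
      push_neg at hcon
      have hin : i < n := lt_trans hlt hPn
      have hne : fext π i ≠ (q : ℕ) := by
        intro he
        have h2 := congrArg (fext π.symm) he
        rw [fext_fext, hGQ] at h2
        omega
      have hstep : ∀ x y, DiagAdj π x y →
          (x.2 < fext π i ∨ x.1 < i) → (y.2 < fext π i ∨ y.1 < i) := by
        rintro x y ⟨hxD, hyD, hadj⟩ hSx
        obtain ⟨hy1, hy2, hy3, hy4⟩ := (inDiag_iff π y.1 y.2).1 hyD
        have hc1 : y.1 = i → fext π y.1 = fext π i := fun h => by rw [h]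
        have hc2 : y.2 = fext π i → fext π.symm y.2 = i := fun h => by rw [h, fext_fext]
        omega
      have hSab : ((a : ℕ) , b).2 < fext π i ∨ ((a : ℕ), b).1 < i := by
        obtain ⟨han, hbn, hab3, hab4⟩ :=
          (inDiag_iff π a b).1 (sameComp_inDiag hco hDpq0)
        have hc3 : a = i → fext π a = fext π i := fun h => by rw [h]
        simp only
        omega
      have hfin := sameComp_rec (fun z => z.2 < fext π i ∨ z.1 < i) hstep hco hSab
      simp only at hfin
      omega
    · rw [hFP]; exact hQC
  have H2 : ∀ j : ℕ, ((π t : Fin n) : ℕ) < j → j ≤ (q : ℕ) → (p : ℕ) < fext π.symm j := by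
    intro j hBj hjq
    rcases hjq.lt_or_eq with hlt | rfl
    · by_contra hcon
      push_neg at hcon
      have hjn : j < n := lt_trans hlt hQn
      have hne : fext π.symm j ≠ (p : ℕ) := by
        intro he
        have h2 := congrArg (fext π) he
        rw [hFG, hFP] at h2
        omega
      have hstep : ∀ x y, DiagAdj π x y →
          (x.1 < fext π.symm j ∨ x.2 < j) → (y.1 < fext π.symm j ∨ y.2 < j) := by
        rintro x y ⟨hxD, hyD, hadj⟩ hSx
        obtain ⟨hy1, hy2, hy3, hy4⟩ := (inDiag_iff π y.1 y.2).1 hyD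
        have hc1 : y.1 = fext π.symm j → fext π y.1 = j := fun h => by rw [h, hFG]
        have hc2 : y.2 = j → fext π.symm y.2 = fext π.symm j := fun h => by rw [h]
        omega
      have hSab : ((a : ℕ), b).1 < fext π.symm j ∨ ((a : ℕ), b).2 < j := by
        obtain ⟨han, hbn, hab3, hab4⟩ :=
          (inDiag_iff π a b).1 (sameComp_inDiag hco hDpq0)
        have hc3 : b = j → fext π.symm b = fext π.symm j := fun h => by rw [h]
        simp only
        omega
      have hfin := sameComp_rec (fun z => z.1 < fext π.symm j ∨ z.2 < j) hstep hco hSab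
      simp only at hfin
      omega
    · rw [hGQ]; exact hPQ'
  -- accessibility consequences
  have hAccM : ∀ i j : ℕ, i < n → j < n → j < fext π i → i < fext π.symm j →
      (p : ℕ) ≤ i → (q : ℕ) ≤ j → i = (p : ℕ) ∧ j = (q : ℕ) := by
    intro i j h1 h2 h3 h4 h5 h6
    exact hacc.2.2 i j ((inDiag_iff π i j).2 ⟨h1, h2, h3, h4⟩) h5 h6
  have hAccA : ∀ i : ℕ, (p : ℕ) < i → i < ((π.symm q : Fin n) : ℕ) → fext π i < (q : ℕ) := by
    intro i h1 h2
    by_contra hcon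
    push_neg at hcon
    have hin : i < n := lt_trans h2 hQ'n
    have hne : fext π i ≠ (q : ℕ) := by
      intro he
      have h3 := congrArg (fext π.symm) he
      rw [fext_fext, hGQ] at h3
      omega
    have h4 := hAccM i (q : ℕ) hin hQn (by omega) (by rw [hGQ]; exact h2) (le_of_lt h1) le_rfl
    omega
  have hAccB : ∀ j : ℕ, (q : ℕ) < j → j < ((π p : Fin n) : ℕ) → fext π.symm j < (p : ℕ) := by
    intro j h1 h2
    by_contra hcon
    push_neg at hcon
    have hjn : j < n := lt_trans h2 hCn
    have hne : fext π.symm j ≠ (p : ℕ) := by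
      intro he
      have h3 := congrArg (fext π) he
      rw [hFG, hFP] at h3
      omega
    have h4 := hAccM (p : ℕ) j hPn hjn (by rw [hFP]; exact h2) (by omega) le_rfl (le_of_lt h1)
    omega
  -- the new permutation
  set σ := π * Equiv.swap p (π.symm q) * Equiv.swap t p with hσdef
  have htp : t ≠ p := Fin.ne_of_val_ne (by omega)
  have htq'' : t ≠ π.symm q := Fin.ne_of_val_ne (by omega)
  have hpq'' : p ≠ π.symm q := Fin.ne_of_val_ne (by omega)
  have hσapp : ∀ x, σ x = π (Equiv.swap p (π.symm q) (Equiv.swap t p x)) := fun x => rfl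
  have hσt : σ t = q := by
    rw [hσapp, Equiv.swap_apply_left, Equiv.swap_apply_left, Equiv.apply_symm_apply]
  have hσp : σ p = π t := by
    rw [hσapp, Equiv.swap_apply_right, Equiv.swap_apply_of_ne_of_ne htp htq'']
  have hσq'' : σ (π.symm q) = π p := by
    rw [hσapp, Equiv.swap_apply_of_ne_of_ne (Ne.symm htq'') (Ne.symm hpq''),
      Equiv.swap_apply_right]
  have hσo : ∀ x, x ≠ t → x ≠ p → x ≠ π.symm q → σ x = π x := by
    intro x h1 h2 h3
    rw [hσapp, Equiv.swap_apply_of_ne_of_ne h1 h2, Equiv.swap_apply_of_ne_of_ne h2 h3]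
  have hσsymm : ∀ y, σ.symm y = Equiv.swap t p (Equiv.swap p (π.symm q) (π.symm y)) := by
    intro y
    rw [Equiv.symm_apply_eq, hσapp]
    simp [Equiv.swap_apply_self]
  have hσsq : σ.symm q = t := by
    rw [hσsymm, Equiv.swap_apply_right, Equiv.swap_apply_right]
  have hσsB : σ.symm (π t) = p := by
    rw [hσsymm, Equiv.symm_apply_apply, Equiv.swap_apply_of_ne_of_ne htp htq'',
      Equiv.swap_apply_left]
  have hσsC : σ.symm (π p) = π.symm q := by
    rw [hσsymm, Equiv.symm_apply_apply, Equiv.swap_apply_left,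
      Equiv.swap_apply_of_ne_of_ne (Ne.symm htq'') (Ne.symm hpq'')]
  have hσso : ∀ y, π.symm y ≠ t → π.symm y ≠ p → π.symm y ≠ π.symm q → σ.symm y = π.symm y := by
    intro y h1 h2 h3
    rw [hσsymm, Equiv.swap_apply_of_ne_of_ne h2 h3, Equiv.swap_apply_of_ne_of_ne h1 h2]
  -- extended values of σ
  have hFσT : fext σ (t : ℕ) = (q : ℕ) := by rw [fext_coe, hσt]
  have hFσP : fext σ (p : ℕ) = ((π t : Fin n) : ℕ) := by rw [fext_coe, hσp]
  have hFσQ' : fext σ ((π.symm q : Fin n) : ℕ) = ((π p : Fin n) : ℕ) := by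
    rw [fext_coe, hσq'']
  have hFσo : ∀ i : ℕ, i ≠ (t : ℕ) → i ≠ (p : ℕ) → i ≠ ((π.symm q : Fin n) : ℕ) →
      fext σ i = fext π i := by
    intro i h1 h2 h3
    by_cases h : i < n
    · rw [fext_eq σ h, fext_eq π h,
        hσo ⟨i, h⟩ (Fin.ne_of_val_ne h1) (Fin.ne_of_val_ne h2) (Fin.ne_of_val_ne h3)]
    · have e1 : fext σ i = i := dif_neg h
      have e2 : fext π i = i := dif_neg h
      rw [e1, e2]
  have hGσQ : fext σ.symm (q : ℕ) = (t : ℕ) := by rw [fext_coe, hσsq]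
  have hGσB : fext σ.symm ((π t : Fin n) : ℕ) = (p : ℕ) := by rw [fext_coe, hσsB]
  have hGσC : fext σ.symm ((π p : Fin n) : ℕ) = ((π.symm q : Fin n) : ℕ) := by
    rw [fext_coe, hσsC]
  have hGσo : ∀ j : ℕ, j ≠ (q : ℕ) → j ≠ ((π t : Fin n) : ℕ) → j ≠ ((π p : Fin n) : ℕ) →
      fext σ.symm j = fext π.symm j := by
    intro j h1 h2 h3
    by_cases h : j < n
    · rw [fext_eq σ.symm h, fext_eq π.symm h]
      rw [hσso ⟨j, h⟩]
      · intro he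
        apply h2
        have h4 := congrArg π he
        rw [Equiv.apply_symm_apply] at h4
        exact congrArg Fin.val h4
      · intro he
        apply h3
        have h4 := congrArg π he
        rw [Equiv.apply_symm_apply] at h4
        exact congrArg Fin.val h4
      · intro he
        apply h1
        have h4 := congrArg π he
        rw [Equiv.apply_symm_apply, Equiv.apply_symm_apply] at h4
        exact congrArg Fin.val h4
    · have e1 : fext σ.symm j = j := dif_neg h
      have e2 : fext π.symm j = j := dif_neg h
      rw [e1, e2]
  -- characterization of the diagram of σ
  have Dchar : ∀ i j : ℕ, InDiag σ i j ↔
      ((i = (t : ℕ) ∧ ((π t : Fin n) : ℕ) ≤ j ∧ j < (q : ℕ)) ∨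
       (j = ((π t : Fin n) : ℕ) ∧ (t : ℕ) ≤ i ∧ i < (p : ℕ)) ∨
       (InDiag π i j ∧ ¬(i = (p : ℕ) ∧ ((π t : Fin n) : ℕ) < j) ∧
         ¬(j = (q : ℕ) ∧ (t : ℕ) < i))) := by
    intro i j
    rw [inDiag_iff σ, inDiag_iff π]
    rcases eq_or_ne i (t : ℕ) with rfl | hiT
    · rcases eq_or_ne j (q : ℕ) with rfl | hjQ
      · rw [hFσT, hGσQ, hFT, hGQ]; omega
      · rcases eq_or_ne j ((π t : Fin n) : ℕ) with rfl | hjB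
        · rw [hFσT, hGσB, hFT, hGB]; omega
        · rcases eq_or_ne j ((π p : Fin n) : ℕ) with rfl | hjC
          · rw [hFσT, hGσC, hFT, hGC]; omega
          · rw [hFσT, hGσo j hjQ hjB hjC, hFT]
            have hh := H2 j
            omega
    · rcases eq_or_ne i (p : ℕ) with rfl | hiP
      · rcases eq_or_ne j (q : ℕ) with rfl | hjQ
        · rw [hFσP, hGσQ, hFP, hGQ]; omega
        · rcases eq_or_ne j ((π t : Fin n) : ℕ) with rfl | hjB
          · rw [hFσP, hGσB, hFP, hGB]; omega
          · rcases eq_or_ne j ((π p : Fin n) : ℕ) with rfl | hjC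
            · rw [hFσP, hGσC, hFP, hGC]; omega
            · rw [hFσP, hGσo j hjQ hjB hjC, hFP]; omega
      · rcases eq_or_ne i ((π.symm q : Fin n) : ℕ) with rfl | hiQ'
        · rcases eq_or_ne j (q : ℕ) with rfl | hjQ
          · rw [hFσQ', hGσQ, hFQ', hGQ]; omega
          · rcases eq_or_ne j ((π t : Fin n) : ℕ) with rfl | hjB
            · rw [hFσQ', hGσB, hFQ', hGB]; omega
            · rcases eq_or_ne j ((π p : Fin n) : ℕ) with rfl | hjC
              · rw [hFσQ', hGσC, hFQ', hGC]; omega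
              · rw [hFσQ', hGσo j hjQ hjB hjC, hFQ']
                have hh := hAccB j
                omega
        · rcases eq_or_ne j (q : ℕ) with rfl | hjQ
          · rw [hFσo i hiT hiP hiQ', hGσQ, hGQ]; omega
          · rcases eq_or_ne j ((π t : Fin n) : ℕ) with rfl | hjB
            · rw [hFσo i hiT hiP hiQ', hGσB, hGB]
              have hh := H1 i
              omega
            · rcases eq_or_ne j ((π p : Fin n) : ℕ) with rfl | hjC
              · rw [hFσo i hiT hiP hiQ', hGσC, hGC]
                have hh := hAccA i
                omega
              · rw [hFσo i hiT hiP hiQ', hGσo j hjQ hjB hjC]; omega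
  -- the final computation
  intro i j
  show (InDiag σ i j ∧ ¬ InDiag σ (i + 1) j ∧ ¬ InDiag σ i (j + 1)) ↔ _
  rw [Dchar i j, Dchar (i + 1) j, Dchar i (j + 1)]
  show _ ↔ (((InDiag π i j ∧ ¬ InDiag π (i + 1) j ∧ ¬ InDiag π i (j + 1)) ∧ _) ∨ _)
  rw [inDiag_iff π i j, inDiag_iff π (i + 1) j, inDiag_iff π i (j + 1)]
  constructor
  · rintro ⟨h1, h2, h3⟩
    rcases h1 with ⟨hiT, hj1, hj2⟩ | ⟨hjB, hi1, hi2⟩ | ⟨⟨hin, hjn, hf, hg⟩, g1, g2⟩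
    · -- new row-t branch
      have hjq : j + 1 = (q : ℕ) := by
        by_contra hc
        exact h3 (Or.inl ⟨hiT, by omega, by omega⟩)
      have hip : i + 1 = (p : ℕ) := by
        by_contra hc
        rcases eq_or_lt_of_le hj1 with he | hlt
        · exact h2 (Or.inr (Or.inl ⟨he.symm, by omega, by omega⟩))
        · refine h2 (Or.inr (Or.inr ⟨⟨by omega, by omega, ?_, ?_⟩, ?_, ?_⟩))
          · have := H1 (i + 1) (by omega) (by omega); omega
          · have := H2 j (by omega) (by omega); omega
          · rintro ⟨hh, -⟩; omega
          · rintro ⟨hh, -⟩; omega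
      exact Or.inr ⟨hip, hjq⟩
    · -- new column-B branch
      have hip : i + 1 = (p : ℕ) := by
        by_contra hc
        exact h2 (Or.inr (Or.inl ⟨hjB, by omega, by omega⟩))
      have hjq : j + 1 = (q : ℕ) := by
        by_contra hc
        rcases eq_or_lt_of_le hi1 with he | hlt
        · exact h3 (Or.inl ⟨he.symm, by omega, by omega⟩)
        · refine h3 (Or.inr (Or.inr ⟨⟨by omega, by omega, ?_, ?_⟩, ?_, ?_⟩))
          · have := H1 i (by omega) (by omega); omega
          · have := H2 (j + 1) (by omega) (by omega); omega
          · rintro ⟨hh, -⟩; omega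
          · rintro ⟨hh, -⟩; omega
      exact Or.inr ⟨hip, hjq⟩
    · -- old-diagram branch
      by_cases hsp : i + 1 = (p : ℕ) ∧ j + 1 = (q : ℕ)
      · exact Or.inr hsp
      have hnd1 : ¬((i + 1) < n ∧ j < n ∧ j < fext π (i + 1) ∧ (i + 1) < fext π.symm j) := by
        rintro ⟨hin1, hjn1, hf1, hg1⟩
        by_cases ha : i + 1 = (p : ℕ) ∧ ((π t : Fin n) : ℕ) < j
        · have hjQ : j ≠ (q : ℕ) := by
            intro he
            have hiT2 : i = (t : ℕ) := by
              have : ¬((t : ℕ) < i) := fun hh => g2 ⟨he, hh⟩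
              omega
            rw [hiT2, hFT] at hf
            omega
          have hjlt : j < (q : ℕ) := by
            by_contra hc2
            have := hAccM (i + 1) j hin1 hjn1 hf1 hg1 (by omega) (by omega)
            omega
          have hjq1 : j + 1 = (q : ℕ) := by
            by_contra hc2
            rcases eq_or_ne i (t : ℕ) with he | hne
            · exact h3 (Or.inl ⟨he, by omega, by omega⟩)
            · refine h3 (Or.inr (Or.inr ⟨⟨hin, by omega, ?_, ?_⟩, ?_, ?_⟩))
              · have := H1 i (by omega) (by omega); omega
              · have := H2 (j + 1) (by omega) (by omega); omega
              · rintro ⟨hh, -⟩; omega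
              · rintro ⟨hh, -⟩; omega
          exact hsp ⟨ha.1, hjq1⟩
        · by_cases hb : j = (q : ℕ) ∧ (t : ℕ) < i + 1
          · obtain ⟨hb1, hb2⟩ := hb
            have hiT2 : i = (t : ℕ) := by
              have : ¬((t : ℕ) < i) := fun hh => g2 ⟨hb1, hh⟩
              omega
            rw [hiT2, hFT] at hf
            omega
          · exact h2 (Or.inr (Or.inr ⟨⟨hin1, hjn1, hf1, hg1⟩, ha, hb⟩))
      have hnd2 : ¬(i < n ∧ (j + 1) < n ∧ (j + 1) < fext π i ∧ i < fext π.symm (j + 1)) := by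
        rintro ⟨hin2, hjn2, hf2, hg2⟩
        by_cases ha : i = (p : ℕ) ∧ ((π t : Fin n) : ℕ) < j + 1
        · have hjB2 : j = ((π t : Fin n) : ℕ) := by
            have : ¬(((π t : Fin n) : ℕ) < j) := fun hh => g1 ⟨ha.1, hh⟩
            omega
          rw [hjB2, hGB] at hg
          omega
        · by_cases hb : j + 1 = (q : ℕ) ∧ (t : ℕ) < i
          · obtain ⟨hb1, hb2⟩ := hb
            have hilt : i < (p : ℕ) := by
              by_contra hc2
              have := hAccM i (j + 1) hin2 hjn2 hf2 hg2 (by omega) (by omega)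
              exact ha ⟨this.1, by omega⟩
            have hiq1 : i + 1 = (p : ℕ) := by
              by_contra hc2
              rcases eq_or_ne j ((π t : Fin n) : ℕ) with he | hne
              · exact h2 (Or.inr (Or.inl ⟨he, by omega, by omega⟩))
              · refine h2 (Or.inr (Or.inr ⟨⟨by omega, hjn, ?_, ?_⟩, ?_, ?_⟩))
                · have := H1 (i + 1) (by omega) (by omega); omega
                · have := H2 j (by omega) (by omega); omega
                · rintro ⟨hh, -⟩; omega
                · rintro ⟨hh, -⟩; omega
            exact hsp ⟨hiq1, hb1⟩
          · exact h3 (Or.inr (Or.inr ⟨⟨hin2, hjn2, hf2, hg2⟩, ha, hb⟩))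
      refine Or.inl ⟨⟨⟨hin, hjn, hf, hg⟩, hnd1, hnd2⟩, ?_⟩
      rintro ⟨hh1, hh2⟩
      exact g2 ⟨hh2, by omega⟩
  · rintro (⟨⟨⟨hin, hjn, hf, hg⟩, hn1, hn2⟩, hne⟩ | ⟨hip, hjq⟩)
    · -- generic essential boxes survive
      have g1 : ¬(i = (p : ℕ) ∧ ((π t : Fin n) : ℕ) < j) := by
        rintro ⟨hiP, hBj⟩
        have hjlt : j < (q : ℕ) := by
          by_contra hc
          have := hAccM i j hin hjn hf hg (by omega) (by omega)
          exact hne ⟨hiP, this.2⟩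
        refine hn2 ⟨hin, by omega, ?_, ?_⟩
        · rw [hiP, hFP]; omega
        · have := H2 (j + 1) (by omega) (by omega); omega
      have g2 : ¬(j = (q : ℕ) ∧ (t : ℕ) < i) := by
        rintro ⟨hjQ, hTi⟩
        have hilt : i < (p : ℕ) := by
          by_contra hc
          have := hAccM i j hin hjn hf hg (by omega) (by omega)
          exact hne ⟨this.1, hjQ⟩
        refine hn1 ⟨by omega, hjn, ?_, ?_⟩
        · have := H1 (i + 1) (by omega) (by omega); omega
        · rw [hjQ, hGQ]; omega
      refine ⟨Or.inr (Or.inr ⟨⟨hin, hjn, hf, hg⟩, g1, g2⟩), ?_, ?_⟩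
      · rintro (⟨hiT1, hBj, hjQ⟩ | ⟨hjB, hT1, hP1⟩ | ⟨hD1, -, -⟩)
        · have hh := H2 (j + 1) (by omega) (by omega)
          have hk : fext π i = j + 1 → i = fext π.symm (j + 1) := fun h => by
            rw [← h, fext_fext]
          exact hn2 ⟨hin, by omega, by omega, by omega⟩
        · rw [hjB, hGB] at hg
          have hh := H2 (j + 1) (by omega) (by omega)
          have hk : fext π i = j + 1 → i = fext π.symm (j + 1) := fun h => by
            rw [← h, fext_fext]
          exact hn2 ⟨hin, by omega, by omega, by omega⟩
        · exact hn1 hD1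
      · rintro (⟨hiT, hBj1, hjQ1⟩ | ⟨hjB1, hTi, hiP⟩ | ⟨hD1, -, -⟩)
        · rw [hiT, hFT] at hf
          have hh := H1 (i + 1) (by omega) (by omega)
          have hk : fext π.symm j = i + 1 → j = fext π (i + 1) := fun h => by
            rw [← h, hFG]
          exact hn1 ⟨by omega, hjn, by omega, by omega⟩
        · have hh := H1 (i + 1) (by omega) (by omega)
          have hk : fext π.symm j = i + 1 → j = fext π (i + 1) := fun h => by
            rw [← h, hFG]
          exact hn1 ⟨by omega, hjn, by omega, by omega⟩
        · exact hn2 hD1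
    · -- the new essential box (p-1, q-1)
      refine ⟨?_, ?_, ?_⟩
      · rcases eq_or_ne i (t : ℕ) with hiT | hiT
        · exact Or.inl ⟨hiT, by omega, by omega⟩
        · rcases eq_or_ne j ((π t : Fin n) : ℕ) with hjB | hjB
          · exact Or.inr (Or.inl ⟨hjB, by omega, by omega⟩)
          · refine Or.inr (Or.inr ⟨⟨by omega, by omega, ?_, ?_⟩, ?_, ?_⟩)
            · have := H1 i (by omega) (by omega); omega
            · have := H2 j (by omega) (by omega); omega
            · rintro ⟨hh, -⟩; omega
            · rintro ⟨hh, -⟩; omega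
      · rintro (⟨hiT1, -, -⟩ | ⟨-, -, hP1⟩ | ⟨⟨-, -, -, hg1⟩, ga, gb⟩)
        · omega
        · omega
        · have hjB : j = ((π t : Fin n) : ℕ) := by
            have : ¬(((π t : Fin n) : ℕ) < j) := fun hh => ga ⟨hip, hh⟩
            omega
          rw [hjB, hGB] at hg1
          omega
      · rintro (⟨-, -, hlt⟩ | ⟨hjB1, -, -⟩ | ⟨⟨-, -, hf1, -⟩, ga, gb⟩)
        · omega
        · omega
        · have hiT : i = (t : ℕ) := by
            have : ¬((t : ℕ) < i) := fun hh => gb ⟨hjq, hh⟩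
            omega
          rw [hiT, hFT] at hf1
          omega
end

section
/- Let π be vexillary with accessible box (p,q) ∈ Ess(π), and define π_P = π ∘ (p, π⁻¹(q)) and π_C = π_P ∘ (t, p) as above. Then both π_P and π_C are vexillary permutations. -/
open Equiv Finset

/-- For a vexillary `π` with accessible box `(p,q) ∈ Ess(π)`, and `t` the row of the
dot of `π` immediately northwest of the connected component of `D(π)` containing
`(p,q)`, both `π_P = π ∘ (p, π⁻¹(q))` and `π_C = π_P ∘ (t, p)` are vexillary. -/
theorem stmt_12 {n : ℕ} (π : Equiv.Perm (Fin n)) (hvex : Vexillary π)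
    (p q : Fin n) (hEss : InEss π p q) (hacc : Accessible π p q)
    (a b : ℕ) (hco : SameComp π (a, b) ((p : ℕ), (q : ℕ)))
    (hnw : ∀ x y : ℕ, SameComp π (x, y) ((p : ℕ), (q : ℕ)) → a ≤ x ∧ b ≤ y)
    (t : Fin n) (ht : (t : ℕ) + 1 = a) (hπt : (π t : ℕ) + 1 = b) :
    Vexillary (π * Equiv.swap p (π.symm q)) ∧
      Vexillary (π * Equiv.swap p (π.symm q) * Equiv.swap t p) := by
  classical
  have fne : ∀ {x y : Fin n}, ¬((x:ℕ) = (y:ℕ)) → x ≠ y :=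
    fun h hxy => h (congrArg Fin.val hxy)
  obtain ⟨hdPQ, hnE1, hnE2⟩ := hEss
  obtain ⟨hpn, hqn, hq_lt, hp_lt⟩ := hdPQ
  simp only [Fin.eta] at hq_lt hp_lt
  set r : Fin n := π.symm q with hrdef
  have hπr : π r = q := by rw [hrdef]; exact π.apply_symm_apply q
  have hpr : (p:ℕ) < (r:ℕ) := hp_lt
  have hqP : (q:ℕ) < (π p : ℕ) := hq_lt
  have hnwpq := hnw p q Relation.ReflTransGen.refl
  have htp : (t:ℕ) < (p:ℕ) := by omega
  have hπtq : (π t : ℕ) < (q:ℕ) := by omega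
  have hvex' : ∀ a' b' c' d' : Fin n, (a':ℕ) < b' → (b':ℕ) < c' → (c':ℕ) < d' →
      (π b' : ℕ) < π a' → (π a' : ℕ) < π d' → (π d' : ℕ) < π c' → False := by
    intro a' b' c' d' h1 h2 h3 h4 h5 h6
    exact hvex ⟨a', b', c', d', h1, h2, h3, h4, h5, h6⟩
  have hbox : ∀ i j : Fin n, (j:ℕ) < π i → (i:ℕ) < π.symm j → InDiag π i j := by
    intro i j h1 h2
    exact ⟨i.isLt, j.isLt, by simpa using h1, by simpa using h2⟩
  have hse : ∀ i j : Fin n, InDiag π i j → (p:ℕ) ≤ i → (q:ℕ) ≤ j →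
      (i:ℕ) = p ∧ (j:ℕ) = q := fun i j h h1 h2 => hacc.2.2 i j h h1 h2
  -- F1 : no dots with value > q strictly between rows p and r
  have F1 : ∀ k : Fin n, (p:ℕ) < k → (k:ℕ) < r → (π k:ℕ) < q := by
    intro k h1 h2
    by_contra hcon
    push_neg at hcon
    have hne : (π k:ℕ) ≠ q := by
      intro he
      have h3 : π k = q := Fin.val_injective he
      have h4 := congrArg π.symm h3
      rw [Equiv.symm_apply_apply] at h4
      rw [← hrdef] at h4
      have := congrArg Fin.val h4
      omega
    have hb := hbox k q (by omega) (by rw [← hrdef]; exact h2)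
    have := (hse k q hb (by omega) le_rfl).1
    omega
  -- F2 : values strictly between q and π p occur at rows < p
  have F2 : ∀ l : Fin n, (q:ℕ) < l → (l:ℕ) < π p → (π.symm l:ℕ) < p := by
    intro l h1 h2
    by_contra hcon
    push_neg at hcon
    have hne : (π.symm l : ℕ) ≠ p := by
      intro he
      have h3 : π.symm l = p := Fin.val_injective he
      have h4 := congrArg π h3
      rw [Equiv.apply_symm_apply] at h4
      have := congrArg Fin.val h4
      omega
    have hb := hbox p l h2 (by omega)
    have := (hse p l hb le_rfl (by omega)).2
    omega
  -- G1 : no dot in the open rectangle between the NW corner (a,b) and (p,q)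
  have G1 : ∀ i : Fin n, a ≤ (i:ℕ) → (i:ℕ) < p → b ≤ (π i:ℕ) → (π i:ℕ) < q → False := by
    intro i hai hip hbi hiq
    have key : ∀ z : ℕ × ℕ, SameComp π z ((p:ℕ), (q:ℕ)) →
        (i:ℕ) < z.1 ∧ (π i:ℕ) < z.2 := by
      intro z hz
      induction hz using Relation.ReflTransGen.head_induction_on with
      | refl => exact ⟨hip, hiq⟩
      | @head z' c' h' _ ih =>
        obtain ⟨hdz, _, hadj⟩ := h'
        obtain ⟨hz1, hz2, hv1, hv2⟩ := hdz
        rcases hadj with ⟨he1, he2⟩ | ⟨he2, he1⟩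
        · refine ⟨by omega, ?_⟩
          rcases he2 with he2 | he2
          · omega
          · by_contra hcon
            push_neg at hcon
            have heq : (π i : ℕ) = z'.2 := by omega
            have hfe : (⟨z'.2, hz2⟩ : Fin n) = π i := Fin.val_injective heq.symm
            rw [hfe, Equiv.symm_apply_apply] at hv2
            omega
        · refine ⟨?_, by omega⟩
          rcases he1 with he1 | he1
          · omega
          · by_contra hcon
            push_neg at hcon
            have heq : (i : ℕ) = z'.1 := by omega
            have hfe : (⟨z'.1, hz1⟩ : Fin n) = i := Fin.val_injective heq.symm
            rw [hfe] at hv1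
            omega
    obtain ⟨h1, _⟩ := key (a, b) hco
    omega
  -- H1 : dots strictly between rows t and p have value < π t or > q
  have H1 : ∀ k : Fin n, (t:ℕ) < k → (k:ℕ) < p → (π k:ℕ) < π t ∨ (q:ℕ) < π k := by
    intro k h1 h2
    by_contra hcon
    push_neg at hcon
    have hne1 : (π k:ℕ) ≠ π t := by
      intro he
      have := π.injective (Fin.val_injective he)
      have := congrArg Fin.val this
      omega
    have hne2 : (π k:ℕ) ≠ q := by
      intro he
      have h3 : π k = q := Fin.val_injective he
      have h4 := congrArg π.symm h3
      rw [Equiv.symm_apply_apply] at h4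
      rw [← hrdef] at h4
      have := congrArg Fin.val h4
      omega
    exact G1 k (by omega) h2 (by omega) (by omega)
  set σ : Equiv.Perm (Fin n) := π * Equiv.swap p r with hσdef
  have hσp : σ p = q := by
    rw [hσdef, Equiv.Perm.mul_apply, Equiv.swap_apply_left]; exact hπr
  have hσr : σ r = π p := by
    rw [hσdef, Equiv.Perm.mul_apply, Equiv.swap_apply_right]
  have hσo : ∀ w : Fin n, w ≠ p → w ≠ r → σ w = π w := by
    intro w h1 h2
    rw [hσdef, Equiv.Perm.mul_apply, Equiv.swap_apply_of_ne_of_ne h1 h2]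
  -- SE lemma for σ : no descending pair of σ-dots strictly SE of (p,q)
  have hSE : ∀ c d : Fin n, (p:ℕ) < c → (c:ℕ) < d → (q:ℕ) < σ d → (σ d:ℕ) < σ c → False := by
    intro c d h1 h2 h3 h4
    rcases eq_or_ne d r with heq | hdr
    · subst d
      rw [hσr] at h3 h4
      have hcp : c ≠ p := fne (by omega)
      have hcr : c ≠ r := fne (by omega)
      rw [hσo c hcp hcr] at h4
      have := F1 c h1 h2
      omega
    · rcases eq_or_ne c r with heq | hcr
      · subst c
        rw [hσr] at h4
        have hdp : d ≠ p := fne (by omega)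
        rw [hσo d hdp hdr] at h3 h4
        have := F2 (π d) h3 h4
        rw [Equiv.symm_apply_apply] at this
        omega
      · have hcp : c ≠ p := fne (by omega)
        have hdp : d ≠ p := fne (by omega)
        rw [hσo c hcp hcr] at h4
        rw [hσo d hdp hdr] at h3 h4
        have hb := hbox c (π d) h4 (by rw [Equiv.symm_apply_apply]; exact h2)
        have := (hse c (π d) hb (by omega) (by omega)).1
        omega
  ------------------------------------------------------------------
  -- Part 1 : σ is vexillary
  ------------------------------------------------------------------
  have hσvex : Vexillary σ := by
    rintro ⟨A, B, C, D, hAB, hBC, hCD, u1, u2, u3⟩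
    have nAB : (A:ℕ) < B := hAB
    have nBC : (B:ℕ) < C := hBC
    have nCD : (C:ℕ) < D := hCD
    have v1 : (σ B : ℕ) < σ A := u1
    have v2 : (σ A : ℕ) < σ D := u2
    have v3 : (σ D : ℕ) < σ C := u3
    rcases eq_or_ne A p with heq | hAp
    · subst A
      rw [hσp] at v1 v2
      rcases eq_or_ne B r with heq | hBr
      · subst B
        rw [hσr] at v1
        omega
      · have hBp : B ≠ p := fne (by omega)
        rw [hσo B hBp hBr] at v1
        rcases eq_or_ne C r with heq | hCr
        · subst C
          -- A=p, C=r : F2 on D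
          have hDp : D ≠ p := fne (by omega)
          have hDr : D ≠ r := fne (by omega)
          rw [hσr] at v3
          rw [hσo D hDp hDr] at v2 v3
          have := F2 (π D) v2 v3
          rw [Equiv.symm_apply_apply] at this
          omega
        · rcases eq_or_ne D r with heq | hDr
          · subst D
            -- A=p, D=r : F1 on C
            have hCp : C ≠ p := fne (by omega)
            rw [hσr] at v3
            rw [hσo C hCp hCr] at v3
            have := F1 C (by omega) (by omega)
            omega
          · -- A=p only
            have hCp : C ≠ p := fne (by omega)
            have hDp : D ≠ p := fne (by omega)
            rw [hσo C hCp hCr] at v3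
            rw [hσo D hDp hDr] at v2 v3
            rcases lt_trichotomy (B:ℕ) (r:ℕ) with h | h | h
            · rcases lt_trichotomy ((π D:ℕ)) ((π p:ℕ)) with h' | h' | h'
              · have := F2 (π D) v2 h'
                rw [Equiv.symm_apply_apply] at this
                omega
              · have : D = p := π.injective (Fin.val_injective h')
                exact absurd (congrArg Fin.val this) (by omega)
              · exact hvex' p B C D nAB nBC nCD (by omega) h' v3
            · exact absurd (Fin.val_injective h) hBr
            · exact hvex' r B C D h nBC nCD (by rw [hπr]; omega) (by rw [hπr]; omega) v3
    · rcases eq_or_ne A r with heq | hAr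
      · subst A
        -- A=r
        have hBp : B ≠ p := fne (by omega)
        have hBr : B ≠ r := fne (by omega)
        have hCp : C ≠ p := fne (by omega)
        have hCr : C ≠ r := fne (by omega)
        have hDp : D ≠ p := fne (by omega)
        have hDr : D ≠ r := fne (by omega)
        rw [hσr] at v1 v2
        rw [hσo B hBp hBr] at v1
        rw [hσo C hCp hCr] at v3
        rw [hσo D hDp hDr] at v2 v3
        exact hvex' p B C D (by omega) nBC nCD v1 v2 v3
      · have hσA := hσo A hAp hAr
        rw [hσA] at v1 v2
        rcases eq_or_ne B p with heq | hBp
        · subst B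
          -- B=p
          rw [hσp] at v1
          rcases eq_or_ne C r with heq | hCr
          · subst C
            -- B=p, C=r : F2 on D
            have hDp : D ≠ p := fne (by omega)
            have hDr : D ≠ r := fne (by omega)
            rw [hσr] at v3
            rw [hσo D hDp hDr] at v2 v3
            have := F2 (π D) (by omega) v3
            rw [Equiv.symm_apply_apply] at this
            omega
          · rcases eq_or_ne D r with heq | hDr
            · subst D
              -- B=p, D=r : F1 on C
              have hCp : C ≠ p := fne (by omega)
              rw [hσr] at v3
              rw [hσo C hCp hCr] at v3
              have := F1 C nBC nCD
              omega
            · -- B=p only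
              have hCp : C ≠ p := fne (by omega)
              have hDp : D ≠ p := fne (by omega)
              rw [hσo C hCp hCr] at v3
              rw [hσo D hDp hDr] at v2 v3
              have hCgt : (r:ℕ) < C := by
                rcases lt_trichotomy (C:ℕ) (r:ℕ) with h | h | h
                · have := F1 C nBC h
                  omega
                · exact absurd (Fin.val_injective h) hCr
                · exact h
              exact hvex' A r C D (by omega) hCgt nCD (by rw [hπr]; omega) v2 v3
        · rcases eq_or_ne B r with heq | hBr
          · subst B
            -- B=r
            rw [hσr] at v1
            have hCp : C ≠ p := fne (by omega)
            have hCr : C ≠ r := fne (by omega)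
            have hDp : D ≠ p := fne (by omega)
            have hDr : D ≠ r := fne (by omega)
            rw [hσo C hCp hCr] at v3
            rw [hσo D hDp hDr] at v2 v3
            have hAltp : (A:ℕ) < p := by
              rcases lt_trichotomy (A:ℕ) (p:ℕ) with h | h | h
              · exact h
              · exact absurd (Fin.val_injective h) hAp
              · have := F1 A h nAB
                omega
            exact hvex' A p C D hAltp (by omega) nCD v1 v2 v3
          · have hσB := hσo B hBp hBr
            rw [hσB] at v1
            rcases eq_or_ne C p with heq | hCp
            · subst C
              rcases eq_or_ne D r with heq | hDr
              · subst D
                -- C=p, D=r : value contradiction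
                rw [hσp, hσr] at v3
                omega
              · -- C=p only
                have hDp : D ≠ p := fne (by omega)
                rw [hσp] at v3
                rw [hσo D hDp hDr] at v2 v3
                exact hvex' A B p D nAB nBC nCD v1 v2 (by omega)
            · rcases eq_or_ne C r with heq | hCr
              · subst C
                -- C=r
                rw [hσr] at v3
                have hDp : D ≠ p := fne (by omega)
                have hDr : D ≠ r := fne (by omega)
                rw [hσo D hDp hDr] at v2 v3
                rcases lt_trichotomy ((π D:ℕ)) (q:ℕ) with h | h | h
                · exact hvex' A B r D nAB nBC nCD v1 v2 (by rw [hπr]; exact h)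
                · have : π D = π r := Fin.val_injective (by rw [hπr]; exact h)
                  exact hDr (π.injective this)
                · have := F2 (π D) h v3
                  rw [Equiv.symm_apply_apply] at this
                  omega
              · have hσC := hσo C hCp hCr
                rw [hσC] at v3
                rcases eq_or_ne D p with heq | hDp
                · subst D
                  -- D=p : pattern (A,B,C,r)
                  rw [hσp] at v2 v3
                  exact hvex' A B C r nAB nBC (by omega) v1
                    (by rw [hπr]; exact v2) (by rw [hπr]; exact v3)
                · rcases eq_or_ne D r with heq | hDr
                  · subst D
                    -- D=r : pattern (A,B,C,p)
                    rw [hσr] at v2 v3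
                    have hCltp : (C:ℕ) < p := by
                      rcases lt_trichotomy (C:ℕ) (p:ℕ) with h | h | h
                      · exact h
                      · exact absurd (Fin.val_injective h) hCp
                      · have := F1 C h nCD
                        omega
                    exact hvex' A B C p nAB nBC hCltp v1 v2 v3
                  · -- none
                    rw [hσo D hDp hDr] at v2 v3
                    exact hvex' A B C D nAB nBC nCD v1 v2 v3
  ------------------------------------------------------------------
  -- Part 2 : τ is vexillary
  ------------------------------------------------------------------
  have hσvex' : ∀ a' b' c' d' : Fin n, (a':ℕ) < b' → (b':ℕ) < c' → (c':ℕ) < d' →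
      (σ b' : ℕ) < σ a' → (σ a' : ℕ) < σ d' → (σ d' : ℕ) < σ c' → False := by
    intro a' b' c' d' h1 h2 h3 h4 h5 h6
    exact hσvex ⟨a', b', c', d', h1, h2, h3, h4, h5, h6⟩
  have htnep : t ≠ p := fne (by omega)
  have htner : t ≠ r := fne (by omega)
  have hσt : σ t = π t := hσo t htnep htner
  set τ : Equiv.Perm (Fin n) := σ * Equiv.swap t p with hτdef
  have hτt : τ t = q := by
    rw [hτdef, Equiv.Perm.mul_apply, Equiv.swap_apply_left]; exact hσp
  have hτp : τ p = π t := by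
    rw [hτdef, Equiv.Perm.mul_apply, Equiv.swap_apply_right]; exact hσt
  have hτo : ∀ w : Fin n, w ≠ t → w ≠ p → τ w = σ w := by
    intro w h1 h2
    rw [hτdef, Equiv.Perm.mul_apply, Equiv.swap_apply_of_ne_of_ne h1 h2]
  have hτvex : Vexillary τ := by
    rintro ⟨A, B, C, D, hAB, hBC, hCD, u1, u2, u3⟩
    have nAB : (A:ℕ) < B := hAB
    have nBC : (B:ℕ) < C := hBC
    have nCD : (C:ℕ) < D := hCD
    have v1 : (τ B : ℕ) < τ A := u1
    have v2 : (τ A : ℕ) < τ D := u2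
    have v3 : (τ D : ℕ) < τ C := u3
    rcases eq_or_ne A t with heq | hAt
    · subst A
      rw [hτt] at v1 v2
      rcases eq_or_ne B p with heq | hBp
      · subst B
        -- (t,p) at slots (1,2) : SE contradiction
        have hCt : C ≠ t := fne (by omega)
        have hCp : C ≠ p := fne (by omega)
        have hDt : D ≠ t := fne (by omega)
        have hDp : D ≠ p := fne (by omega)
        rw [hτo C hCt hCp] at v3
        rw [hτo D hDt hDp] at v2 v3
        exact hSE C D nBC nCD v2 v3
      · rcases eq_or_ne C p with heq | hCp
        · subst C
          rw [hτp] at v3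
          omega
        · rcases eq_or_ne D p with heq | hDp
          · subst D
            rw [hτp] at v2
            omega
          · -- t only, slot 1
            have hBt : B ≠ t := fne (by omega)
            have hCt : C ≠ t := fne (by omega)
            have hDt : D ≠ t := fne (by omega)
            rw [hτo B hBt hBp] at v1
            rw [hτo C hCt hCp] at v3
            rw [hτo D hDt hDp] at v2 v3
            rcases lt_trichotomy (B:ℕ) (p:ℕ) with h | h | h
            · have hBr : B ≠ r := fne (by omega)
              have hσB := hσo B hBp hBr
              rw [hσB] at v1
              rcases H1 B nAB h with hH | hH
              · exact hσvex' t B C D nAB nBC nCD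
                  (by rw [hσt, hσB]; exact hH) (by rw [hσt]; omega) v3
              · omega
            · exact absurd (Fin.val_injective h) hBp
            · exact hσvex' p B C D h nBC nCD (by rw [hσp]; exact v1)
                (by rw [hσp]; exact v2) v3
    · rcases eq_or_ne A p with heq | hAp
      · subst A
        -- p only, slot 1 : pattern (t,B,C,D)
        rw [hτp] at v1 v2
        have hBt : B ≠ t := fne (by omega)
        have hBp : B ≠ p := fne (by omega)
        have hCt : C ≠ t := fne (by omega)
        have hCp : C ≠ p := fne (by omega)
        have hDt : D ≠ t := fne (by omega)
        have hDp : D ≠ p := fne (by omega)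
        rw [hτo B hBt hBp] at v1
        rw [hτo C hCt hCp] at v3
        rw [hτo D hDt hDp] at v2 v3
        exact hσvex' t B C D (by omega) nBC nCD
          (by rw [hσt]; exact v1) (by rw [hσt]; exact v2) v3
      · rcases eq_or_ne B t with heq | hBt
        · subst B
          -- B = t
          rw [hτt] at v1
          rcases eq_or_ne C p with heq | hCp
          · subst C
            rw [hτp] at v3
            omega
          · rcases eq_or_ne D p with heq | hDp
            · subst D
              rw [hτp] at v2
              omega
            · -- t only, slot 2 : pattern (A,t,C,D)
              have hCt : C ≠ t := fne (by omega)
              have hDt : D ≠ t := fne (by omega)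
              rw [hτo A hAt hAp] at v1 v2
              rw [hτo C hCt hCp] at v3
              rw [hτo D hDt hDp] at v2 v3
              exact hσvex' A t C D nAB nBC nCD (by rw [hσt]; omega) v2 v3
        · rcases eq_or_ne B p with heq | hBp
          · subst B
            -- p only, slot 2
            rw [hτp] at v1
            have hCt : C ≠ t := fne (by omega)
            have hCp : C ≠ p := fne (by omega)
            have hDt : D ≠ t := fne (by omega)
            have hDp : D ≠ p := fne (by omega)
            rw [hτo A hAt hAp] at v1 v2
            rw [hτo C hCt hCp] at v3
            rw [hτo D hDt hDp] at v2 v3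
            rcases lt_trichotomy (A:ℕ) (t:ℕ) with h | h | h
            · exact hσvex' A t C D h (by omega) nCD (by rw [hσt]; exact v1) v2 v3
            · exact absurd (Fin.val_injective h) hAt
            · have hAr : A ≠ r := fne (by omega)
              have hσA := hσo A hAp hAr
              rw [hσA] at v1 v2
              rcases H1 A h nAB with hH | hH
              · omega
              · exact hSE C D nBC nCD (by omega) v3
          · rcases eq_or_ne C t with heq | hCt
            · subst C
              rcases eq_or_ne D p with heq | hDp
              · subst D
                -- (t,p) at slots (3,4) : π-pattern (A,B,p,r)
                rw [hτp] at v2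
                have hBr : B ≠ r := fne (by omega)
                have hAr : A ≠ r := fne (by omega)
                rw [hτo A hAt hAp, hσo A hAp hAr] at v1 v2
                rw [hτo B hBt hBp, hσo B hBp hBr] at v1
                exact hvex' A B p r nAB (by omega) hpr v1
                  (by rw [hπr]; omega) (by rw [hπr]; omega)
              · -- t only, slot 3
                rw [hτt] at v3
                have hDt : D ≠ t := fne (by omega)
                rw [hτo A hAt hAp] at v1 v2
                rw [hτo B hBt hBp] at v1
                rw [hτo D hDt hDp] at v2 v3
                rcases lt_trichotomy (D:ℕ) (p:ℕ) with h | h | h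
                · have hDr : D ≠ r := fne (by omega)
                  have hσD := hσo D hDp hDr
                  rcases H1 D nCD h with hH | hH
                  · rw [← hσD] at hH
                    exact hσvex' A B t D nAB nBC nCD v1 v2 (by rw [hσt]; exact hH)
                  · rw [← hσD] at hH
                    omega
                · exact absurd (Fin.val_injective h) hDp
                · exact hσvex' A B p D nAB (by omega) h v1 v2 (by rw [hσp]; exact v3)
            · rcases eq_or_ne C p with heq | hCp
              · subst C
                -- p only, slot 3
                rw [hτp] at v3
                have hDt : D ≠ t := fne (by omega)
                have hDp : D ≠ p := fne (by omega)
                rw [hτo A hAt hAp] at v1 v2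
                rw [hτo B hBt hBp] at v1
                rw [hτo D hDt hDp] at v2 v3
                exact hσvex' A B p D nAB nBC nCD v1 v2 (by rw [hσp]; omega)
              · rcases eq_or_ne D t with heq | hDt
                · subst D
                  -- t only, slot 4 : pattern (A,B,C,p)
                  rw [hτt] at v2 v3
                  rw [hτo A hAt hAp] at v1 v2
                  rw [hτo B hBt hBp] at v1
                  rw [hτo C hCt hCp] at v3
                  exact hσvex' A B C p nAB nBC (by omega) v1
                    (by rw [hσp]; exact v2) (by rw [hσp]; exact v3)
                · rcases eq_or_ne D p with heq | hDp
                  · subst D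
                    -- p only, slot 4
                    rw [hτp] at v2 v3
                    rw [hτo A hAt hAp] at v1 v2
                    rw [hτo B hBt hBp] at v1
                    rw [hτo C hCt hCp] at v3
                    rcases lt_trichotomy (C:ℕ) (t:ℕ) with h | h | h
                    · exact hσvex' A B C t nAB nBC h v1
                        (by rw [hσt]; exact v2) (by rw [hσt]; exact v3)
                    · exact absurd (Fin.val_injective h) hCt
                    · have hCr : C ≠ r := fne (by omega)
                      have hσC := hσo C hCp hCr
                      rcases H1 C h nCD with hH | hH
                      · rw [← hσC] at hH
                        omega
                      · rw [← hσC] at hH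
                        exact hσvex' A B C p nAB nBC nCD v1
                          (by rw [hσp]; omega) (by rw [hσp]; exact hH)
                  · -- none
                    rw [hτo A hAt hAp] at v1 v2
                    rw [hτo B hBt hBp] at v1
                    rw [hτo C hCt hCp] at v3
                    rw [hτo D hDt hDp] at v2 v3
                    exact hσvex' A B C D nAB nBC nCD v1 v2 v3
  exact ⟨hσvex, hτvex⟩
end

section
/- For any permutation π ∈ S_n, the diagonal term (product of the diagonal entries) of every minor of size 1 + r(i,j) of the northwest i × j submatrix of the generic matrix z (for any 1 ≤ i,j ≤ n) is divisible by the diagonal term of some minor of size 1 + r(p,q) of the northwest p × q submatrix for some (p,q) in the essential set Ess(π). -/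
open Equiv Finset

open MvPolynomial

/-- `δ` is a diagonal in the northwest rectangle with southeast corner `(i,j)`. -/
def IsDiagonalIn (m : ℕ) (δ : Fin m → ℕ × ℕ) (i j : ℕ) : Prop :=
  (∀ l l' : Fin m, l < l' → (δ l).1 < (δ l').1 ∧ (δ l).2 < (δ l').2) ∧
  (∀ l, (δ l).1 ≤ i ∧ (δ l).2 ≤ j)

lemma rk_row_ext {n : ℕ} (π : Equiv.Perm (Fin n)) {i j : ℕ} (hi : i + 1 < n)
    (h : j < (π ⟨i + 1, hi⟩ : ℕ)) : rk π (i + 1) j = rk π i j := by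
  unfold rk
  congr 1
  ext a
  simp only [Finset.mem_filter, Finset.mem_univ, true_and]
  constructor
  · rintro ⟨ha, hpa⟩
    refine ⟨?_, hpa⟩
    rcases Nat.lt_or_ge (a : ℕ) (i + 1) with h' | h'
    · omega
    · have : a = ⟨i + 1, hi⟩ := Fin.ext (show (a : ℕ) = i + 1 by omega)
      rw [this] at hpa
      omega
  · rintro ⟨ha, hpa⟩
    exact ⟨by omega, hpa⟩

lemma rk_col_ext {n : ℕ} (π : Equiv.Perm (Fin n)) {i j : ℕ} (hj : j + 1 < n)
    (h : i < (π.symm ⟨j + 1, hj⟩ : ℕ)) : rk π i (j + 1) = rk π i j := by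
  unfold rk
  congr 1
  ext a
  simp only [Finset.mem_filter, Finset.mem_univ, true_and]
  constructor
  · rintro ⟨ha, hpa⟩
    refine ⟨ha, ?_⟩
    rcases Nat.lt_or_ge (π a : ℕ) (j + 1) with h' | h'
    · omega
    · have hpe : π a = ⟨j + 1, hj⟩ := Fin.ext (show (π a : ℕ) = j + 1 by omega)
      have hae : (a : ℕ) = (π.symm ⟨j + 1, hj⟩ : ℕ) := by
        rw [← hpe, Equiv.symm_apply_apply]
      omega
  · rintro ⟨ha, hpa⟩
    exact ⟨ha, by omega⟩

lemma rk_row_drop {n : ℕ} (π : Equiv.Perm (Fin n)) {i j : ℕ} (hi : i < n)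
    (h : (π ⟨i, hi⟩ : ℕ) ≤ j) (hi1 : 1 ≤ i) : rk π i j = rk π (i - 1) j + 1 := by
  unfold rk
  have hins : (Finset.univ.filter (fun a : Fin n => (a : ℕ) ≤ i ∧ (π a : ℕ) ≤ j)) =
      insert ⟨i, hi⟩ (Finset.univ.filter (fun a : Fin n => (a : ℕ) ≤ i - 1 ∧ (π a : ℕ) ≤ j)) := by
    ext a
    simp only [Finset.mem_filter, Finset.mem_univ, true_and, Finset.mem_insert]
    constructor
    · rintro ⟨ha, hpa⟩
      rcases Nat.lt_or_ge (a : ℕ) i with h' | h'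
      · exact Or.inr ⟨by omega, hpa⟩
      · exact Or.inl (Fin.ext (show (a : ℕ) = i by omega))
    · rintro (rfl | ⟨ha, hpa⟩)
      · exact ⟨le_refl _, h⟩
      · exact ⟨by omega, hpa⟩
  rw [hins, Finset.card_insert_of_notMem]
  simp only [Finset.mem_filter, Finset.mem_univ, true_and, not_and]
  intro ha
  omega

lemma rk_col_drop {n : ℕ} (π : Equiv.Perm (Fin n)) {i j : ℕ} (hj : j < n)
    (h : (π.symm ⟨j, hj⟩ : ℕ) ≤ i) (hj1 : 1 ≤ j) : rk π i j = rk π i (j - 1) + 1 := by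
  unfold rk
  have hins : (Finset.univ.filter (fun a : Fin n => (a : ℕ) ≤ i ∧ (π a : ℕ) ≤ j)) =
      insert (π.symm ⟨j, hj⟩)
        (Finset.univ.filter (fun a : Fin n => (a : ℕ) ≤ i ∧ (π a : ℕ) ≤ j - 1)) := by
    ext a
    simp only [Finset.mem_filter, Finset.mem_univ, true_and, Finset.mem_insert]
    constructor
    · rintro ⟨ha, hpa⟩
      rcases Nat.lt_or_ge (π a : ℕ) j with h' | h'
      · exact Or.inr ⟨ha, by omega⟩
      · left
        have hpe : π a = ⟨j, hj⟩ := Fin.ext (show (π a : ℕ) = j by omega)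
        rw [← hpe, Equiv.symm_apply_apply]
    · rintro (rfl | ⟨ha, hpa⟩)
      · refine ⟨h, ?_⟩
        rw [Equiv.apply_symm_apply]
      · exact ⟨ha, by omega⟩
  rw [hins, Finset.card_insert_of_notMem]
  simp only [Finset.mem_filter, Finset.mem_univ, true_and, not_and]
  intro ha
  rw [Equiv.apply_symm_apply]
  show ¬ j ≤ j - 1
  omega

lemma rk_pos_row {n : ℕ} (π : Equiv.Perm (Fin n)) {i j : ℕ} (hi : i < n)
    (h : (π ⟨i, hi⟩ : ℕ) ≤ j) : 1 ≤ rk π i j := by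
  have : (⟨i, hi⟩ : Fin n) ∈
      Finset.univ.filter (fun a : Fin n => (a : ℕ) ≤ i ∧ (π a : ℕ) ≤ j) := by
    simp only [Finset.mem_filter, Finset.mem_univ, true_and]
    exact ⟨le_refl _, h⟩
  exact Finset.card_pos.mpr ⟨_, this⟩

lemma rk_pos_col {n : ℕ} (π : Equiv.Perm (Fin n)) {i j : ℕ} (hj : j < n)
    (h : (π.symm ⟨j, hj⟩ : ℕ) ≤ i) : 1 ≤ rk π i j := by
  have : π.symm ⟨j, hj⟩ ∈
      Finset.univ.filter (fun a : Fin n => (a : ℕ) ≤ i ∧ (π a : ℕ) ≤ j) := by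
    simp only [Finset.mem_filter, Finset.mem_univ, true_and]
    refine ⟨h, ?_⟩
    rw [Equiv.apply_symm_apply]
  exact Finset.card_pos.mpr ⟨_, this⟩

/-- Starting from any box of the diagram, walking southeast (while the rank stays
constant) reaches an essential box. -/
lemma exists_ess_of_inDiag : ∀ (N : ℕ) {n : ℕ} (π : Equiv.Perm (Fin n)) (i j : ℕ),
    2 * n ≤ i + j + N → InDiag π i j →
    ∃ p q : ℕ, InEss π p q ∧ i ≤ p ∧ j ≤ q ∧ rk π p q = rk π i j := by
  intro N
  induction N with
  | zero =>
    intro n π i j hN hD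
    obtain ⟨hp, hq, -, -⟩ := hD
    omega
  | succ N ih =>
    intro n π i j hN hD
    by_cases h1 : InDiag π (i + 1) j
    · obtain ⟨hp, hq, hlt, hlt2⟩ := h1
      obtain ⟨p, q, he, hip, hjq, hr⟩ := ih π (i + 1) j (by omega) ⟨hp, hq, hlt, hlt2⟩
      exact ⟨p, q, he, by omega, hjq, by rw [hr, rk_row_ext π hp hlt]⟩
    · by_cases h2 : InDiag π i (j + 1)
      · obtain ⟨hp, hq, hlt1, hlt2⟩ := h2
        obtain ⟨p, q, he, hip, hjq, hr⟩ := ih π i (j + 1) (by omega) ⟨hp, hq, hlt1, hlt2⟩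
        exact ⟨p, q, he, hip, by omega, by rw [hr, rk_col_ext π hq hlt2]⟩
      · exact ⟨i, j, ⟨hD, h1, h2⟩, le_refl _, le_refl _, rfl⟩


/-- The case where `(i,j)` is itself a box of the diagram: walk southeast to an
essential box; the rank is unchanged and the very same diagonal works. -/
lemma inDiag_case {n : ℕ} (π : Equiv.Perm (Fin n)) {i j : ℕ} (hD : InDiag π i j)
    (δ : Fin (1 + rk π i j) → ℕ × ℕ) (hδ : IsDiagonalIn (1 + rk π i j) δ i j) :
    ∃ p q : ℕ, InEss π p q ∧
      ∃ ε : Fin (1 + rk π p q) → ℕ × ℕ, IsDiagonalIn (1 + rk π p q) ε p q ∧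
        (∏ l, (X (ε l) : MvPolynomial (ℕ × ℕ) ℤ)) ∣
          ∏ l, (X (δ l) : MvPolynomial (ℕ × ℕ) ℤ) := by
  obtain ⟨p, q, he, hip, hjq, hr⟩ := exists_ess_of_inDiag (2 * n) π i j (by omega) hD
  have hc : 1 + rk π p q = 1 + rk π i j := by rw [hr]
  refine ⟨p, q, he, fun l => δ (Fin.cast hc l), ⟨?_, ?_⟩, ?_⟩
  · intro l l' hll
    refine hδ.1 _ _ ?_
    simp only [Fin.lt_def, Fin.coe_cast]
    exact hll
  · intro l
    exact ⟨le_trans (hδ.2 _).1 hip, le_trans (hδ.2 _).2 hjq⟩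
  · have heq : (∏ l : Fin (1 + rk π p q), (X (δ (Fin.cast hc l)) : MvPolynomial (ℕ × ℕ) ℤ))
        = ∏ l : Fin (1 + rk π i j), X (δ l) :=
      Fintype.prod_equiv (finCongr hc) _ _ (fun l => rfl)
    rw [heq]

lemma stmt_aux : ∀ (N : ℕ) {n : ℕ} (π : Equiv.Perm (Fin n)) (i j : ℕ),
    i + j ≤ N → i < n → j < n →
    ∀ δ : Fin (1 + rk π i j) → ℕ × ℕ, IsDiagonalIn (1 + rk π i j) δ i j →
      ∃ p q : ℕ, InEss π p q ∧
        ∃ ε : Fin (1 + rk π p q) → ℕ × ℕ, IsDiagonalIn (1 + rk π p q) ε p q ∧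
          (∏ l, (X (ε l) : MvPolynomial (ℕ × ℕ) ℤ)) ∣
            ∏ l, (X (δ l) : MvPolynomial (ℕ × ℕ) ℤ) := by
  intro N
  induction N with
  | zero =>
    intro n π i j hN hi hj δ hδ
    have hi0 : i = 0 := by omega
    have hj0 : j = 0 := by omega
    subst hi0; subst hj0
    by_cases hD : InDiag π 0 0
    · exact inDiag_case π hD δ hδ
    · have hcases : (π ⟨0, hi⟩ : ℕ) ≤ 0 ∨ (π.symm ⟨0, hj⟩ : ℕ) ≤ 0 := by
        by_contra hc
        push_neg at hc
        exact hD ⟨hi, hj, hc.1, hc.2⟩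
      have hrk : 1 ≤ rk π 0 0 := hcases.elim (rk_pos_row π hi) (rk_pos_col π hj)
      exfalso
      have h01 : (⟨0, by omega⟩ : Fin (1 + rk π 0 0)) < ⟨1, by omega⟩ :=
        Fin.mk_lt_mk.mpr Nat.zero_lt_one
      have hinc := hδ.1 _ _ h01
      have b1 := (hδ.2 ⟨1, by omega⟩).1
      omega
  | succ N ih =>
    intro n π i j hN hi hj δ hδ
    by_cases hD : InDiag π i j
    · exact inDiag_case π hD δ hδ
    · have hcases : (π ⟨i, hi⟩ : ℕ) ≤ j ∨ (π.symm ⟨j, hj⟩ : ℕ) ≤ i := by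
        by_contra hc
        push_neg at hc
        exact hD ⟨hi, hj, hc.1, hc.2⟩
      rcases hcases with hrow | hcol
      · by_cases hi0 : i = 0
        · exfalso
          have hrk : 1 ≤ rk π i j := rk_pos_row π hi hrow
          have h01 : (⟨0, by omega⟩ : Fin (1 + rk π i j)) < ⟨1, by omega⟩ := by
            simp [Fin.lt_def]
          have hinc := hδ.1 _ _ h01
          have b1 := (hδ.2 ⟨1, by omega⟩).1
          omega
        · have hdrop : rk π i j = rk π (i - 1) j + 1 := rk_row_drop π hi hrow (by omega)
          have hc : 1 + rk π i j = (1 + rk π (i - 1) j) + 1 := by omega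
          have hδ' : IsDiagonalIn (1 + rk π (i - 1) j)
              (fun l => δ (Fin.cast hc.symm l.castSucc)) (i - 1) j := by
            constructor
            · intro l l' hll
              refine hδ.1 _ _ ?_
              simp only [Fin.lt_def, Fin.coe_cast, Fin.coe_castSucc]
              exact hll
            · intro l
              have hinc := hδ.1 (Fin.cast hc.symm l.castSucc)
                (Fin.cast hc.symm (Fin.last (1 + rk π (i - 1) j))) (by
                  simp only [Fin.lt_def, Fin.coe_cast, Fin.coe_castSucc, Fin.val_last]
                  exact l.isLt)
              have hb := (hδ.2 (Fin.cast hc.symm (Fin.last (1 + rk π (i - 1) j)))).1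
              refine ⟨?_, (hδ.2 _).2⟩
              show (δ (Fin.cast hc.symm l.castSucc)).1 ≤ i - 1
              omega
          obtain ⟨p, q, he, ε, hε, hdvd⟩ := ih π (i - 1) j (by omega) (by omega) hj _ hδ'
          refine ⟨p, q, he, ε, hε, hdvd.trans ?_⟩
          have heq : (∏ l : Fin (1 + rk π i j), (X (δ l) : MvPolynomial (ℕ × ℕ) ℤ))
              = ∏ l : Fin ((1 + rk π (i - 1) j) + 1), X (δ (Fin.cast hc.symm l)) :=
            Fintype.prod_equiv (finCongr hc) _ _ (fun l => rfl)
          rw [heq, Fin.prod_univ_castSucc]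
          exact dvd_mul_right _ _
      · by_cases hj0 : j = 0
        · exfalso
          have hrk : 1 ≤ rk π i j := rk_pos_col π hj hcol
          have h01 : (⟨0, by omega⟩ : Fin (1 + rk π i j)) < ⟨1, by omega⟩ := by
            simp [Fin.lt_def]
          have hinc := hδ.1 _ _ h01
          have b1 := (hδ.2 ⟨1, by omega⟩).2
          omega
        · have hdrop : rk π i j = rk π i (j - 1) + 1 := rk_col_drop π hj hcol (by omega)
          have hc : 1 + rk π i j = (1 + rk π i (j - 1)) + 1 := by omega
          have hδ' : IsDiagonalIn (1 + rk π i (j - 1))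
              (fun l => δ (Fin.cast hc.symm l.castSucc)) i (j - 1) := by
            constructor
            · intro l l' hll
              refine hδ.1 _ _ ?_
              simp only [Fin.lt_def, Fin.coe_cast, Fin.coe_castSucc]
              exact hll
            · intro l
              have hinc := hδ.1 (Fin.cast hc.symm l.castSucc)
                (Fin.cast hc.symm (Fin.last (1 + rk π i (j - 1)))) (by
                  simp only [Fin.lt_def, Fin.coe_cast, Fin.coe_castSucc, Fin.val_last]
                  exact l.isLt)
              have hb := (hδ.2 (Fin.cast hc.symm (Fin.last (1 + rk π i (j - 1))))).2
              refine ⟨(hδ.2 _).1, ?_⟩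
              show (δ (Fin.cast hc.symm l.castSucc)).2 ≤ j - 1
              omega
          obtain ⟨p, q, he, ε, hε, hdvd⟩ := ih π i (j - 1) (by omega) hi (by omega) _ hδ'
          refine ⟨p, q, he, ε, hε, hdvd.trans ?_⟩
          have heq : (∏ l : Fin (1 + rk π i j), (X (δ l) : MvPolynomial (ℕ × ℕ) ℤ))
              = ∏ l : Fin ((1 + rk π i (j - 1)) + 1), X (δ (Fin.cast hc.symm l)) :=
            Fintype.prod_equiv (finCongr hc) _ _ (fun l => rfl)
          rw [heq, Fin.prod_univ_castSucc]
          exact dvd_mul_right _ _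

/-- For any `π ∈ S_n`, the diagonal term of every minor of size `1 + r(i,j)` of the
northwest `i × j` submatrix of the generic matrix (for any box `(i,j)` of the grid)
is divisible by the diagonal term of some minor of size `1 + r(p,q)` of the
northwest `p × q` submatrix for some `(p,q) ∈ Ess(π)`.  Diagonal terms are the
products of the variables `X (a,b)` along the diagonal. -/
theorem stmt_17 {n : ℕ} (π : Equiv.Perm (Fin n)) :
    ∀ i j : ℕ, i < n → j < n →
      ∀ δ : Fin (1 + rk π i j) → ℕ × ℕ, IsDiagonalIn (1 + rk π i j) δ i j →
        ∃ p q : ℕ, InEss π p q ∧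
          ∃ ε : Fin (1 + rk π p q) → ℕ × ℕ, IsDiagonalIn (1 + rk π p q) ε p q ∧
            (∏ l, (X (ε l) : MvPolynomial (ℕ × ℕ) ℤ)) ∣
              ∏ l, (X (δ l) : MvPolynomial (ℕ × ℕ) ℤ) := by
  intro i j hi hj δ hδ
  exact stmt_aux (i + j) π i j le_rfl hi hj δ hδ
end

section
/- For any permutation π ∈ S_n, the set D(π) of diagram boxes poisons A_π; that is, for every (p,q) ∈ Ess(π) and every diagonal of size 1 + r(p,q) in the northwest p × q rectangle (a sequence of 1 + r(p,q) positions with strictly increasing rows and columns), at least one position of the diagonal lies in D(π). -/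
open Equiv Finset

/-- The diagram `D(π)` poisons `A_π`: every diagonal of size `1 + r(p,q)` in the
northwest rectangle with corner `(p,q) ∈ Ess(π)` meets `D(π)`. -/
theorem stmt_18 {n : ℕ} (π : Equiv.Perm (Fin n)) :
    ∀ p q : ℕ, InEss π p q →
      ∀ δ : Fin (1 + rk π p q) → ℕ × ℕ, IsDiagonalIn (1 + rk π p q) δ p q →
        ∃ l, InDiag π (δ l).1 (δ l).2 := by
  intro p q hess δ hδ
  by_contra h
  push_neg at h
  obtain ⟨hpn, hqn, -, -⟩ := hess.1
  have hb : ∀ l, (δ l).1 ≤ p ∧ (δ l).2 ≤ q := hδ.2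
  have key : ∀ l : Fin (1 + rk π p q), ∃ d : Fin n,
      ((d : ℕ) ≤ p ∧ (π d : ℕ) ≤ q) ∧
      ((d : ℕ) ≤ (δ l).1 ∧ (π d : ℕ) ≤ (δ l).2) ∧
      ((d : ℕ) = (δ l).1 ∨ (π d : ℕ) = (δ l).2) := by
    intro l
    have ha : (δ l).1 < n := lt_of_le_of_lt (hb l).1 hpn
    have hbn : (δ l).2 < n := lt_of_le_of_lt (hb l).2 hqn
    have hnd := h l
    rw [InDiag] at hnd
    push_neg at hnd
    by_cases hc : (π ⟨(δ l).1, ha⟩ : ℕ) ≤ (δ l).2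
    · exact ⟨⟨(δ l).1, ha⟩, ⟨(hb l).1, le_trans hc (hb l).2⟩, ⟨le_refl _, hc⟩,
        Or.inl rfl⟩
    · have h2 := hnd ha hbn (lt_of_not_ge hc)
      refine ⟨π.symm ⟨(δ l).2, hbn⟩, ?_, ?_, ?_⟩
      · constructor
        · exact le_trans h2 (hb l).1
        · simpa using (hb l).2
      · constructor
        · exact h2
        · simp
      · right; simp
  choose f hf using key
  have hinj : Function.Injective f := by
    intro l l' he
    by_contra hne
    have main : ∀ a b : Fin (1 + rk π p q), a < b → f a = f b → False := by
      intro a b hab heq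
      obtain ⟨h1, h2⟩ := hδ.1 a b hab
      obtain ⟨-, ⟨ha1, ha2⟩, -⟩ := hf a
      obtain ⟨-, -, hb3⟩ := hf b
      rw [heq] at ha1 ha2
      rcases hb3 with h3 | h3 <;> omega
    rcases Ne.lt_or_gt hne with hlt | hlt
    · exact main l l' hlt he
    · exact main l' l hlt he.symm
  have hmem : ∀ l ∈ (Finset.univ : Finset (Fin (1 + rk π p q))),
      f l ∈ Finset.univ.filter (fun i : Fin n => (i : ℕ) ≤ p ∧ (π i : ℕ) ≤ q) := by
    intro l _
    simp only [Finset.mem_filter, Finset.mem_univ, true_and]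
    exact (hf l).1
  have hcard := Finset.card_le_card_of_injOn f hmem (Function.Injective.injOn hinj)
  simp only [Finset.card_univ, Fintype.card_fin] at hcard
  rw [show (Finset.univ.filter (fun i : Fin n => (i : ℕ) ≤ p ∧ (π i : ℕ) ≤ q)).card
      = rk π p q from rfl] at hcard
  omega
end
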